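/- arXiv:2310.13067 — 9 statements merged into one kernel-verified Lean document; each statement's English description precedes it below -/
import Mathlib

section
/- If u is a nontrivial universal partial cycle for A^n (i.e., u contains at least one diamond and at least one non-diamond character), then the length of u is strictly greater than n. -/
/-- The window of length `n` of the cyclic partial word `u` starting at position `i`
covers the total word `w : Fin n → Fin a`: at each position `u` is a diamond (`none`)
or agrees with `w`. -/
def Covers (a n : ℕ) (u : ℕ → Option (Fin a)) (i : ℕ) (w : Fin n → Fin a) : Prop :=
  ∀ j : Fin n, u (i + (j : ℕ)) = none ∨ u (i + (j : ℕ)) = some (w j)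

/-- `u`, viewed as a cyclic partial word of length `N` (an `N`-periodic function
`ℕ → Option (Fin a)`), is a universal partial cycle for `(Fin a)^n`: each total word
of length `n` is covered by exactly one of the `N` cyclic windows. -/
def IsUpcycle (a n N : ℕ) (u : ℕ → Option (Fin a)) : Prop :=
  (∀ i, u (i + N) = u i) ∧ ∀ w : Fin n → Fin a, ∃! i : Fin N, Covers a n u (i : ℕ) w

/-!
If `N ≤ n`, every window of length `n` runs once around the whole cycle, so a window
covering the constant word `c'` forces every letter of `u` to be `c'`. Since `u` has a
letter `c` and `a ≥ 2` provides some `c' ≠ c`, the constant word `c'` is not covered.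
-/

open Function

theorem Function.Periodic.exists_lt_add_eq {α : Type*} {u : ℕ → α} {N : ℕ}
    (hu : Periodic u N) (hN : 0 < N) (s i : ℕ) : ∃ j < N, u (s + j) = u i := by
  refine ⟨(N - s % N + i) % N, Nat.mod_lt _ hN, ?_⟩
  have hsum : s + (N - s % N + i) = i + N * (s / N + 1) := by
    have := Nat.div_add_mod s N
    have := (Nat.mod_lt s hN).le
    rw [Nat.mul_add]
    omega
  rw [← hu.map_mod_nat, Nat.add_mod_mod, hsum, Nat.add_mul_mod_self_left, hu.map_mod_nat]

theorem IsUpcycle.length_pos {a n N : ℕ} {u : ℕ → Option (Fin a)} (hu : IsUpcycle a n N u)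
    (ha : 0 < a) : 0 < N := by
  obtain ⟨i, -⟩ := hu.2 fun _ => ⟨0, ha⟩
  exact Fin.pos i

theorem Covers.letter_eq_of_periodic {a n N : ℕ} {u : ℕ → Option (Fin a)} {s i : ℕ}
    {c d : Fin a} (hs : Covers a n u s fun _ => c) (hu : Periodic u N) (hN : 0 < N)
    (hNn : N ≤ n) (hi : u i = some d) : d = c := by
  obtain ⟨j, hjN, hj⟩ := hu.exists_lt_add_eq hN s i
  rw [hi] at hj
  rcases hs ⟨j, hjN.trans_le hNn⟩ with h | h <;> rw [hj] at h
  · exact absurd h (Option.some_ne_none d)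
  · exact Option.some_injective _ h

theorem nontrivial_upcycle_length_general (a n N : ℕ) (ha : 2 ≤ a)
    (u : ℕ → Option (Fin a)) (hu : IsUpcycle a n N u)
    (hletter : ∃ i, u i ≠ none) :
    n < N := by
  by_contra! hNn
  have hN := hu.length_pos (by omega)
  obtain ⟨i, hi⟩ := hletter
  obtain ⟨c, hc⟩ := Option.ne_none_iff_exists'.mp hi
  have : Nontrivial (Fin a) := Fin.nontrivial_iff_two_le.mpr ha
  obtain ⟨c', hc'⟩ := exists_ne c
  obtain ⟨s, hs, -⟩ := hu.2 fun _ => c'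
  exact hc' (hs.letter_eq_of_periodic hu.1 hN hNn hc).symm

/-- A nontrivial upcycle (one containing at least one diamond and at least one letter)
has length strictly greater than `n`. -/
theorem nontrivial_upcycle_length (a n N : ℕ) (ha : 2 ≤ a)
    (u : ℕ → Option (Fin a)) (hu : IsUpcycle a n N u)
    (hdiam : ∃ i, u i = none) (hletter : ∃ i, u i ≠ none) :
    n < N :=
  nontrivial_upcycle_length_general a n N ha u hu hletter
end

section
/- The concatenation of all words of {0,...,a-1}^n in lexicographic order forms an (a,n,n)-perfect necklace. -/
/-- `v`, viewed as a cyclic word of length `t * a ^ n` (a periodic function `ℕ → Fin a`),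
is an `(a, n, t)`-perfect necklace: for each residue class `j` mod `t`, every word of
length `n` occurs exactly once as the window starting at a position `≡ j (mod t)`. -/
def IsPerfectNecklace (a n t : ℕ) (v : ℕ → Fin a) : Prop :=
  (∀ i, v (i + t * a ^ n) = v i) ∧
  ∀ j : Fin t, ∀ w : Fin n → Fin a,
    ∃! i : Fin (t * a ^ n), (i : ℕ) % t = (j : ℕ) ∧
      ∀ m : Fin n, v ((i : ℕ) + (m : ℕ)) = w m

/-- The lexicographic concatenation word. -/
def lexV (a n : ℕ) (ha : 0 < a) : ℕ → Fin a := fun i =>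
  ⟨(((i % (n * a ^ n)) / n) / a ^ (n - 1 - (i % (n * a ^ n)) % n)) % a,
    Nat.mod_lt _ ha⟩

lemma lex_mod_split (a n : ℕ) (ha : 0 < a) (hn : 0 < n) (Q r : ℕ) (hr : r < n) :
    (n * Q + r) % (n * a ^ n) = n * (Q % a ^ n) + r := by
  have hpow : 0 < a ^ n := pow_pos ha n
  have hQ : Q % a ^ n < a ^ n := Nat.mod_lt _ hpow
  have h1 : n * Q + r = (n * a ^ n) * (Q / a ^ n) + (n * (Q % a ^ n) + r) := by
    have := Nat.div_add_mod Q (a ^ n)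
    calc n * Q + r = n * (a ^ n * (Q / a ^ n) + Q % a ^ n) + r := by rw [this]
      _ = (n * a ^ n) * (Q / a ^ n) + (n * (Q % a ^ n) + r) := by ring
  rw [h1, Nat.mul_add_mod, Nat.mod_eq_of_lt]
  calc n * (Q % a ^ n) + r < n * (Q % a ^ n) + n := by omega
    _ = n * (Q % a ^ n + 1) := by ring
    _ ≤ n * a ^ n := Nat.mul_le_mul_left _ (by omega)

lemma lexV_apply (a n : ℕ) (ha : 0 < a) (hn : 0 < n) (Q r : ℕ) (hr : r < n) :
    lexV a n ha (n * Q + r) = ⟨(Q % a ^ n / a ^ (n - 1 - r)) % a, Nat.mod_lt _ ha⟩ := by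
  apply Fin.ext
  simp only [lexV]
  rw [lex_mod_split a n ha hn Q r hr, Nat.mul_add_div hn, Nat.mul_add_mod,
    Nat.div_eq_of_lt hr, Nat.mod_eq_of_lt hr, Nat.add_zero]

lemma modpow (a : ℕ) (ha : 0 < a) (k x : ℕ) :
    x % a ^ (k + 1) = a ^ k * (x / a ^ k % a) + x % a ^ k := by
  have hpow : 0 < a ^ k := pow_pos ha k
  have hr : x % a ^ k < a ^ k := Nat.mod_lt _ hpow
  have hu : x / a ^ k % a < a := Nat.mod_lt _ ha
  conv_lhs => rw [← Nat.div_add_mod x (a ^ k)]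
  rw [pow_succ, Nat.add_mod, Nat.mul_mod_mul_left,
    Nat.mod_eq_of_lt (lt_of_lt_of_le hr (Nat.le_mul_of_pos_right _ ha)),
    Nat.mod_eq_of_lt]
  calc a ^ k * (x / a ^ k % a) + x % a ^ k < a ^ k * (x / a ^ k % a) + a ^ k := by omega
    _ = a ^ k * (x / a ^ k % a + 1) := by ring
    _ ≤ a ^ k * a := Nat.mul_le_mul_left _ (by omega)

lemma mod_eq_of_digits (a : ℕ) (ha : 0 < a) :
    ∀ (k x y : ℕ), (∀ d < k, x / a ^ d % a = y / a ^ d % a) → x % a ^ k = y % a ^ k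
  | 0, x, y, _ => by simp [Nat.mod_one]
  | (k + 1), x, y, h => by
    rw [modpow a ha k x, modpow a ha k y, h k (by omega),
      mod_eq_of_digits a ha k x y (fun d hd => h d (by omega))]

lemma div_eq_of_digits (a n k : ℕ) (ha : 0 < a) (hk : k ≤ n) (x y : ℕ)
    (hx : x < a ^ n) (hy : y < a ^ n)
    (h : ∀ d, k ≤ d → d < n → x / a ^ d % a = y / a ^ d % a) :
    x / a ^ k = y / a ^ k := by
  have hsplit : a ^ k * a ^ (n - k) = a ^ n := by rw [← pow_add]; congr 1; omega
  have hX : x / a ^ k < a ^ (n - k) := Nat.div_lt_of_lt_mul (by rw [hsplit]; exact hx)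
  have hY : y / a ^ k < a ^ (n - k) := Nat.div_lt_of_lt_mul (by rw [hsplit]; exact hy)
  have := mod_eq_of_digits a ha (n - k) (x / a ^ k) (y / a ^ k) (fun d hd => by
    rw [Nat.div_div_eq_div_mul, Nat.div_div_eq_div_mul, ← pow_add]
    exact h (k + d) (by omega) (by omega))
  rwa [Nat.mod_eq_of_lt hX, Nat.mod_eq_of_lt hY] at this

lemma lexV_window (a n : ℕ) (ha : 0 < a) (hn : 0 < n) (i m : ℕ) (hm : m < n) :
    lexV a n ha (i + m) =
      if i % n + m < n then
        ⟨((i / n) % a ^ n / a ^ (n - 1 - (i % n + m))) % a, Nat.mod_lt _ ha⟩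
      else
        ⟨((i / n + 1) % a ^ n / a ^ (n - 1 - (i % n + m - n))) % a, Nat.mod_lt _ ha⟩ := by
  have hd := Nat.div_add_mod i n
  split
  · next hcase =>
    have : i + m = n * (i / n) + (i % n + m) := by omega
    rw [this, lexV_apply a n ha hn _ _ hcase]
  · next hcase =>
    have hlt : i % n + m - n < n := by have := Nat.mod_lt i hn; omega
    have : i + m = n * (i / n + 1) + (i % n + m - n) := by
      have := Nat.mod_lt i hn
      have h2 : n * (i / n + 1) = n * (i / n) + n := by ring
      omega
    rw [this, lexV_apply a n ha hn _ _ hlt]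

lemma key_inj' (a n : ℕ) (ha : 0 < a) (hn : 0 < n) (j q1 q2 : ℕ)
    (hjlt : j < n) (hq1lt : q1 < a ^ n) (hq2lt : q2 < a ^ n)
    (hw : ∀ m : ℕ, m < n → lexV a n ha (n * q1 + j + m) = lexV a n ha (n * q2 + j + m)) :
    q1 = q2 := by
  have hpow : 0 < a ^ n := pow_pos ha n
  have emod : ∀ q : ℕ, (n * q + j) % n = j := fun q => by
    rw [Nat.mul_add_mod, Nat.mod_eq_of_lt hjlt]
  have ediv : ∀ q : ℕ, (n * q + j) / n = q := fun q => by
    rw [Nat.mul_add_div hn, Nat.div_eq_of_lt hjlt, Nat.add_zero]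
  -- low digits of q1 and q2 agree
  have hA : ∀ d, d < n - j → q1 / a ^ d % a = q2 / a ^ d % a := by
    intro d hd
    have hm : n - 1 - d - j < n := by omega
    have h := hw _ hm
    rw [lexV_window a n ha hn _ _ hm, lexV_window a n ha hn _ _ hm] at h
    rw [emod, emod, ediv, ediv, if_pos (by omega), if_pos (by omega)] at h
    have h' := congrArg Fin.val h
    simp only at h'
    rw [Nat.mod_eq_of_lt hq1lt, Nat.mod_eq_of_lt hq2lt] at h'
    have hidx : n - 1 - (j + (n - 1 - d - j)) = d := by omega
    rwa [hidx] at h'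
  -- high digits of q1+1, q2+1 (mod a^n) agree
  have hB : ∀ d, n - j ≤ d → d < n →
      (q1 + 1) % a ^ n / a ^ d % a = (q2 + 1) % a ^ n / a ^ d % a := by
    intro d hd1' hd2'
    have hm : 2 * n - 1 - d - j < n := by omega
    have h := hw _ hm
    rw [lexV_window a n ha hn _ _ hm, lexV_window a n ha hn _ _ hm] at h
    rw [emod, emod, ediv, ediv, if_neg (by omega), if_neg (by omega)] at h
    have h' := congrArg Fin.val h
    simp only at h'
    have hidx : n - 1 - (j + (2 * n - 1 - d - j) - n) = d := by omega
    rwa [hidx] at h'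
  have hkn : n - j ≤ n := by omega
  have hmodk : q1 % a ^ (n - j) = q2 % a ^ (n - j) :=
    mod_eq_of_digits a ha (n - j) q1 q2 hA
  have hdvd : a ^ (n - j) ∣ a ^ n := pow_dvd_pow a hkn
  have hdiv : (q1 + 1) % a ^ n / a ^ (n - j) = (q2 + 1) % a ^ n / a ^ (n - j) :=
    div_eq_of_digits a n (n - j) ha hkn _ _ (Nat.mod_lt _ hpow) (Nat.mod_lt _ hpow) hB
  have hmod : (q1 + 1) % a ^ n % a ^ (n - j) = (q2 + 1) % a ^ n % a ^ (n - j) := by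
    rw [Nat.mod_mod_of_dvd _ hdvd, Nat.mod_mod_of_dvd _ hdvd, Nat.add_mod q1, Nat.add_mod q2,
      hmodk]
  have hfull : (q1 + 1) % a ^ n = (q2 + 1) % a ^ n := by
    have e1 := Nat.div_add_mod ((q1 + 1) % a ^ n) (a ^ (n - j))
    have e2 := Nat.div_add_mod ((q2 + 1) % a ^ n) (a ^ (n - j))
    have e3 : a ^ (n - j) * ((q1 + 1) % a ^ n / a ^ (n - j)) =
        a ^ (n - j) * ((q2 + 1) % a ^ n / a ^ (n - j)) := by rw [hdiv]
    omega
  rcases Nat.lt_or_ge (q1 + 1) (a ^ n) with hc1 | hc1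
  · rcases Nat.lt_or_ge (q2 + 1) (a ^ n) with hc2 | hc2
    · rw [Nat.mod_eq_of_lt hc1, Nat.mod_eq_of_lt hc2] at hfull; omega
    · have hc2' : q2 + 1 = a ^ n := by omega
      rw [Nat.mod_eq_of_lt hc1, hc2', Nat.mod_self] at hfull; omega
  · have hc1' : q1 + 1 = a ^ n := by omega
    rcases Nat.lt_or_ge (q2 + 1) (a ^ n) with hc2 | hc2
    · rw [hc1', Nat.mod_self, Nat.mod_eq_of_lt hc2] at hfull; omega
    · omega

lemma key_inj (a n : ℕ) (ha : 0 < a) (hn : 0 < n) (i1 i2 : ℕ)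
    (h1 : i1 < n * a ^ n) (h2 : i2 < n * a ^ n) (hj : i1 % n = i2 % n)
    (hw : ∀ m : ℕ, m < n → lexV a n ha (i1 + m) = lexV a n ha (i2 + m)) :
    i1 = i2 := by
  have hd1 := Nat.div_add_mod i1 n
  have hd2 := Nat.div_add_mod i2 n
  have hq : i1 / n = i2 / n := by
    refine key_inj' a n ha hn (i1 % n) (i1 / n) (i2 / n) (Nat.mod_lt _ hn)
      (Nat.div_lt_of_lt_mul h1) (Nat.div_lt_of_lt_mul h2) (fun m hm => ?_)
    have e1 : n * (i1 / n) + i1 % n + m = i1 + m := by omega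
    have e2 : n * (i2 / n) + i1 % n + m = i2 + m := by omega
    rw [e1, e2]
    exact hw m hm
  have : n * (i1 / n) = n * (i2 / n) := by rw [hq]
  omega

/-- The concatenation of all `a ^ n` words of length `n` over `{0, …, a-1}` in
lexicographic order (the `p`-th word having `m`-th character `(p / a ^ (n-1-m)) % a`)
is an `(a, n, n)`-perfect necklace. -/
theorem lex_concat_isPerfectNecklace (a n : ℕ) (ha : 0 < a) (hn : 0 < n) :
    IsPerfectNecklace a n n (fun i =>
      ⟨(((i % (n * a ^ n)) / n) / a ^ (n - 1 - (i % (n * a ^ n)) % n)) % a,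
        Nat.mod_lt _ ha⟩) := by
  show IsPerfectNecklace a n n (lexV a n ha)
  constructor
  · intro i
    apply Fin.ext
    simp only [lexV]
    rw [Nat.add_mod_right]
  · intro j w
    let Φ : Fin (n * a ^ n) → Fin n × (Fin n → Fin a) :=
      fun i => (⟨(i : ℕ) % n, Nat.mod_lt _ hn⟩, fun m => lexV a n ha ((i : ℕ) + (m : ℕ)))
    have hinj : Function.Injective Φ := by
      intro i1 i2 h
      have hfst : (i1 : ℕ) % n = (i2 : ℕ) % n := by
        have := congrArg (fun p => (p.1 : ℕ)) h
        simpa [Φ] using this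
      have hsnd : ∀ m : ℕ, m < n → lexV a n ha ((i1 : ℕ) + m) = lexV a n ha ((i2 : ℕ) + m) := by
        intro m hm
        have := congrFun (congrArg Prod.snd h) ⟨m, hm⟩
        simpa [Φ] using this
      exact Fin.ext (key_inj a n ha hn i1 i2 i1.isLt i2.isLt hfst hsnd)
    have hcard : Fintype.card (Fin (n * a ^ n)) = Fintype.card (Fin n × (Fin n → Fin a)) := by
      simp [Fintype.card_fun]
    have hbij : Function.Bijective Φ :=
      (Fintype.bijective_iff_injective_and_card Φ).2 ⟨hinj, hcard⟩
    obtain ⟨i, hi, hu⟩ := hbij.existsUnique (j, w)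
    refine ⟨i, ⟨?_, ?_⟩, ?_⟩
    · have := congrArg (fun p => (p.1 : ℕ)) hi
      simpa [Φ] using this
    · intro m
      have := congrFun (congrArg Prod.snd hi) m
      simpa [Φ] using this
    · rintro i' ⟨hj', hw'⟩
      apply hu
      refine Prod.ext ?_ ?_
      · exact Fin.ext (by simpa [Φ] using hj')
      · funext m
        simpa [Φ] using hw' m
end

section
/- Let 0 ≤ r < n and let w = (w[1]···w[a^n]) be an (a,n,n+r)-perfect necklace, where each block w[p] has length n+r. For every q ≥ 1, the cyclic word v = (v[1]···v[a^n]) is an (a,n,nq+r)-perfect necklace, where v[p] is the concatenation of q copies of the first n characters of w[p] followed by the last r characters of w[p]. -/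
/-!
Fix a residue class `j` of start positions modulo the block length `n * q + r`. If
`j + n ≤ n * q`, the window at offset `j` of the `p`-th block lies inside the repeated prefix, so
it is a cyclic rotation of the window of `w` at the start of the `p`-th block of `w`. Otherwise it
equals the window of `w` at offset `j + n - n * q` of the `p`-th block; when it runs into the next
block it still does, because every block begins with the first `n` characters of the
corresponding block of `w`. Either way `p ↦ window` is a bijection onto all words because the
corresponding map for a class of `w` is.
-/

open Function

def cyclicShift (n k : ℕ) (m : Fin n) : Fin n := ⟨(k + m) % n, Nat.mod_lt _ m.pos⟩

theorem cyclicShift_bijective (n k : ℕ) : Bijective (cyclicShift n k) :=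
  Finite.injective_iff_bijective.1 fun m m' h =>
    Fin.ext <| (Nat.ModEq.add_left_cancel' k (Fin.val_eq_of_eq h)).eq_of_lt_of_lt m.isLt m'.isLt

theorem existsUnique_fin_mul_mod_eq_iff {L N j : ℕ} (hj : j < L) {P : ℕ → Prop} :
    (∃! i : Fin (L * N), (i : ℕ) % L = j ∧ P i) ↔ ∃! p : Fin N, P (p * L + j) := by
  have hmod (p : ℕ) : (p * L + j) % L = j := by
    rw [Nat.mul_comm, Nat.mul_add_mod, Nat.mod_eq_of_lt hj]
  let e (p : Fin N) : Fin (L * N) := ⟨p * L + j, by nlinarith [p.isLt]⟩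
  have he_inj : Injective e := fun p p' h =>
    Fin.ext <| Nat.eq_of_mul_eq_mul_right (Nat.zero_lt_of_lt hj) <| by simpa [e] using h
  have he_surj (i : Fin (L * N)) (hi : (i : ℕ) % L = j) : ∃ p, e p = i :=
    ⟨⟨i / L, Nat.div_lt_of_lt_mul i.isLt⟩, Fin.ext (by simp [e, ← hi, Nat.div_add_mod'])⟩
  constructor
  · rintro ⟨i, ⟨hi, hPi⟩, huniq⟩
    obtain ⟨p, rfl⟩ := he_surj i hi
    exact ⟨p, hPi, fun p' hp' => he_inj (huniq _ ⟨hmod p', hp'⟩)⟩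
  · rintro ⟨p, hPp, huniq⟩
    refine ⟨e p, ⟨hmod p, hPp⟩, fun i ⟨hi, hPi⟩ => ?_⟩
    obtain ⟨p', rfl⟩ := he_surj i hi
    rw [huniq p' hPi]

section Blocks

variable {α : Type*}

def window (n : ℕ) (v : ℕ → α) (i : ℕ) : Fin n → α := fun m => v (i + m)

theorem isPerfectNecklace_iff_bijective {a n t : ℕ} {v : ℕ → Fin a} :
    IsPerfectNecklace a n t v ↔
      Periodic v (t * a ^ n) ∧
        ∀ j : Fin t, Bijective fun p : Fin (a ^ n) => window n v (p * t + j) := by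
  refine and_congr Iff.rfl (forall_congr' fun j => ?_)
  simp only [bijective_iff_existsUnique, window, funext_iff]
  exact forall_congr' fun u =>
    existsUnique_fin_mul_mod_eq_iff (P := fun i => ∀ m : Fin n, v (i + m) = u m) j.isLt

def repeatBlocks (n r q N : ℕ) (w : ℕ → α) (i : ℕ) : α :=
  let L := n * q + r
  let i' := i % (L * N)
  let p := i' / L
  let j := i' % L
  if j < n * q then w (p * (n + r) + j % n) else w (p * (n + r) + n + (j - n * q))

variable {n r q N : ℕ} {w : ℕ → α}

theorem repeatBlocks_periodic : Periodic (repeatBlocks n r q N w) ((n * q + r) * N) := fun i => by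
  simp only [repeatBlocks, Nat.add_mod_right]

theorem repeatBlocks_mul_add (hw : Periodic w ((n + r) * N)) (p : ℕ) {k : ℕ} (hk : k < n * q + r) :
    repeatBlocks n r q N w (p * (n * q + r) + k) =
      if k < n * q then w (p * (n + r) + k % n) else w (p * (n + r) + n + (k - n * q)) := by
  have hL : 0 < n * q + r := by omega
  have hdiv : (p * (n * q + r) + k) % ((n * q + r) * N) / (n * q + r) = p % N := by
    rw [Nat.mod_mul_right_div_self, Nat.mul_comm, Nat.mul_add_div hL, Nat.div_eq_of_lt hk,
      Nat.add_zero]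
  have hmod : (p * (n * q + r) + k) % ((n * q + r) * N) % (n * q + r) = k := by
    rw [Nat.mod_mul_right_mod, Nat.mul_comm, Nat.mul_add_mod, Nat.mod_eq_of_lt hk]
  have hblock (s : ℕ) : w (p % N * (n + r) + s) = w (p * (n + r) + s) := by
    conv_rhs => rw [← Nat.mod_add_div p N]
    rw [← hw.nat_mul (p / N), Nat.cast_id]
    ring_nf
  simp only [repeatBlocks, hdiv, hmod, hblock, Nat.add_assoc]

theorem window_repeatBlocks_of_add_le (hw : Periodic w ((n + r) * N)) (p : ℕ) {j : ℕ}
    (hj : j + n ≤ n * q) :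
    window n (repeatBlocks n r q N w) (p * (n * q + r) + j) =
      window n w (p * (n + r)) ∘ cyclicShift n j := by
  funext m
  have hm := m.isLt
  simp only [window, comp_apply, cyclicShift]
  rw [Nat.add_assoc, repeatBlocks_mul_add hw p (by omega), if_pos (by omega)]

theorem window_repeatBlocks_of_lt_add (hw : Periodic w ((n + r) * N)) (hq : 1 ≤ q) (p : ℕ)
    {j : ℕ} (hj : n * q < j + n) (hjL : j < n * q + r) :
    window n (repeatBlocks n r q N w) (p * (n * q + r) + j) =
      window n w (p * (n + r) + (j + n - n * q)) := by
  funext m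
  have hm := m.isLt
  have hnq : n ≤ n * q := Nat.le_mul_of_pos_right n hq
  simp only [window]
  by_cases hjm : j + m < n * q + r
  · rw [Nat.add_assoc, repeatBlocks_mul_add hw p hjm]
    split_ifs with hrep
    · -- the window starts in the last copy of the prefix
      rw [show j + m = (j + n + m - n * q) + n * (q - 1) by rw [Nat.mul_sub_one]; omega,
        Nat.add_mul_mod_self_left, Nat.mod_eq_of_lt (by omega)]
      congr 1
      omega
    · congr 1
      omega
  · have hnext : p * (n * q + r) + j + m = (p + 1) * (n * q + r) + (j + m - (n * q + r)) := by
      rw [Nat.add_one_mul]; omega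
    rw [hnext, repeatBlocks_mul_add hw (p + 1) (by omega), if_pos (by omega),
      Nat.mod_eq_of_lt (by omega), Nat.add_one_mul]
    congr 1
    omega

end Blocks

theorem blocks_repeat_isPerfectNecklace_general (a n r q : ℕ) (hq : 1 ≤ q) (w : ℕ → Fin a)
    (hw : IsPerfectNecklace a n (n + r) w) :
    IsPerfectNecklace a n (n * q + r) (fun i =>
      let L := n * q + r
      let i' := i % (L * a ^ n)
      let p := i' / L
      let j := i' % L
      if j < n * q then w (p * (n + r) + j % n) else w (p * (n + r) + n + (j - n * q))) := by
  change IsPerfectNecklace a n (n * q + r) (repeatBlocks n r q (a ^ n) w)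
  rw [isPerfectNecklace_iff_bijective] at hw ⊢
  obtain ⟨hper, hbij⟩ := hw
  refine ⟨repeatBlocks_periodic, fun j => ?_⟩
  by_cases hA : j + n ≤ n * q
  · have hnr : 0 < n + r := by
      rcases Nat.eq_zero_or_pos n with rfl | hn
      · simpa using j.pos
      · omega
    simp_rw [window_repeatBlocks_of_add_le hper _ hA]
    simpa using (cyclicShift_bijective n j).comp_right.comp (hbij ⟨0, hnr⟩)
  · simp_rw [window_repeatBlocks_of_lt_add hper hq _ (not_le.1 hA) j.isLt]
    exact hbij ⟨j + n - n * q, by omega⟩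

/-- Given an `(a, n, n+r)`-perfect necklace `w` with blocks `w[p]` of length `n + r`
(so `w[p]_j = w (p * (n+r) + j)`), for every `q ≥ 1` the cyclic word whose `p`-th block
is `q` copies of the first `n` characters of `w[p]` followed by the last `r` characters
of `w[p]` is an `(a, n, n*q + r)`-perfect necklace. -/
theorem blocks_repeat_isPerfectNecklace (a n r q : ℕ) (ha : 0 < a) (hr : r < n)
    (hq : 1 ≤ q) (w : ℕ → Fin a) (hw : IsPerfectNecklace a n (n + r) w) :
    IsPerfectNecklace a n (n * q + r) (fun i =>
      let L := n * q + r
      let i' := i % (L * a ^ n)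
      let p := i' / L
      let j := i' % L
      if j < n * q then w (p * (n + r) + j % n) else w (p * (n + r) + n + (j - n * q))) :=
  blocks_repeat_isPerfectNecklace_general a n r q hq w hw
end

section
/- Let w = (w_0···w_{a^n−1}) be a De Bruijn cycle for {0,...,a−1}^n with a ≥ 2, and let r ∈ {1,...,n} satisfy gcd(a^n, r) = 1. For p ∈ {0,...,a^n−1} define w[p] = w_{rp}···w_{rp+n−1} w_{rp}···w_{rp+r−1} (indices mod a^n). Then the cyclic word v = (w[0]···w[a^n−1]) is an (a,n,n+r)-perfect necklace. -/
/-- `w`, viewed as a cyclic word of length `a ^ n` (an `a ^ n`-periodic function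
`ℕ → Fin a`), is a De Bruijn cycle for `(Fin a)^n`: every word of length `n` appears
exactly once as a cyclic window. -/
def IsDeBruijn (a n : ℕ) (w : ℕ → Fin a) : Prop :=
  (∀ i, w (i + a ^ n) = w i) ∧
  ∀ x : Fin n → Fin a, ∃! i : Fin (a ^ n), ∀ m : Fin n, w ((i : ℕ) + (m : ℕ)) = x m

/-- Auxiliary: the `i`-th letter of the necklace, before reducing mod the total length. -/
def nkAux (a n r : ℕ) (w : ℕ → Fin a) (i : ℕ) : Fin a :=
  if i % (n + r) < n then w (r * (i / (n + r)) + i % (n + r))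
  else w (r * (i / (n + r)) + (i % (n + r) - n))

/-- Given a De Bruijn cycle `w` for `{0,…,a-1}^n` with `a ≥ 2` and `r ∈ {1,…,n}` with
`gcd(a^n, r) = 1`, the cyclic word with `p`-th block
`w_{rp} ⋯ w_{rp+n-1} w_{rp} ⋯ w_{rp+r-1}` (indices mod `a^n`, handled by periodicity)
is an `(a, n, n + r)`-perfect necklace. -/
theorem deBruijn_shift_isPerfectNecklace (a n r : ℕ) (ha : 2 ≤ a)
    (hr1 : 1 ≤ r) (hrn : r ≤ n) (hgcd : Nat.gcd (a ^ n) r = 1)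
    (w : ℕ → Fin a) (hw : IsDeBruijn a n w) :
    IsPerfectNecklace a n (n + r) (fun i =>
      let L := n + r
      let i' := i % (L * a ^ n)
      let p := i' / L
      let j := i' % L
      if j < n then w (r * p + j) else w (r * p + (j - n))) := by
  obtain ⟨hper, huniq⟩ := hw
  have hn0 : 0 < n := hr1.trans hrn
  have hN0 : 0 < a ^ n := pow_pos (by omega) n
  have hL0 : 0 < n + r := by omega
  haveI : NeZero (a ^ n) := ⟨hN0.ne'⟩
  -- periodicity helpers for w
  have hwk : ∀ k i, w (i + k * a ^ n) = w i := by
    intro k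
    induction k with
    | zero => intro i; simp
    | succ k ih =>
      intro i
      have h : i + (k + 1) * a ^ n = (i + k * a ^ n) + a ^ n := by ring
      rw [h, hper, ih]
  have hwmod : ∀ i, w (i % a ^ n) = w i := by
    intro i
    conv_rhs => rw [← Nat.mod_add_div i (a ^ n)]
    rw [mul_comm (a ^ n) (i / a ^ n), hwk]
  show IsPerfectNecklace a n (n + r) (fun i => nkAux a n r w (i % ((n + r) * a ^ n)))
  -- block value lemma
  have hblock : ∀ P j, j < n + r → nkAux a n r w ((P * (n + r) + j) % ((n + r) * a ^ n)) =
      if j < n then w (r * P + j) else w (r * P + (j - n)) := by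
    intro P j hj
    have hPm : P % a ^ n < a ^ n := Nat.mod_lt _ hN0
    have harg : (P * (n + r) + j) % ((n + r) * a ^ n) = (P % a ^ n) * (n + r) + j := by
      have h1 : P * (n + r) + j =
          ((P % a ^ n) * (n + r) + j) + (P / a ^ n) * ((n + r) * a ^ n) := by
        conv_lhs => rw [← Nat.div_add_mod P (a ^ n)]
        ring
      rw [h1, Nat.add_mul_mod_self_right, Nat.mod_eq_of_lt]
      calc (P % a ^ n) * (n + r) + j < (P % a ^ n + 1) * (n + r) := by
            rw [add_mul, one_mul]; omega
        _ ≤ a ^ n * (n + r) := Nat.mul_le_mul_right _ (by omega)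
        _ = (n + r) * a ^ n := mul_comm _ _
    have hdiv : ((P % a ^ n) * (n + r) + j) / (n + r) = P % a ^ n := by
      rw [mul_comm, Nat.mul_add_div hL0, Nat.div_eq_of_lt hj, Nat.add_zero]
    have hmodL : ((P % a ^ n) * (n + r) + j) % (n + r) = j := by
      rw [mul_comm, Nat.mul_add_mod, Nat.mod_eq_of_lt hj]
    have hshift : ∀ s, w (r * (P % a ^ n) + s) = w (r * P + s) := by
      intro s
      have h3 : r * P + s = (r * (P % a ^ n) + s) + (r * (P / a ^ n)) * a ^ n := by
        conv_lhs => rw [← Nat.div_add_mod P (a ^ n)]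
        ring
      rw [h3, hwk]
    simp only [nkAux, harg, hdiv, hmodL]
    split_ifs <;> rw [hshift]
  -- window lemma
  have hwin : ∀ P j m, j < n + r → m < n →
      nkAux a n r w ((P * (n + r) + j + m) % ((n + r) * a ^ n)) =
        w (r * P + (if j < n then (j + m) % n else j - n + m)) := by
    intro P j m hj hm
    by_cases hq : j + m < n + r
    · rw [add_assoc, hblock P (j + m) hq]
      by_cases hjn : j < n
      · rw [if_pos hjn]
        by_cases hqn : j + m < n
        · rw [if_pos hqn, Nat.mod_eq_of_lt hqn]
        · rw [if_neg hqn]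
          have h4 : (j + m) % n = j + m - n := by
            rw [Nat.mod_eq_sub_mod (le_of_not_gt hqn), Nat.mod_eq_of_lt (by omega)]
          rw [h4]
      · rw [if_neg hjn]
        have hqn : ¬ (j + m < n) := by omega
        rw [if_neg hqn]
        congr 2
        omega
    · have hqL : j + m - (n + r) < n := by omega
      have h1 : P * (n + r) + j + m = (P + 1) * (n + r) + (j + m - (n + r)) := by
        rw [add_mul, one_mul]; omega
      rw [h1, hblock (P + 1) _ (by omega), if_pos hqL]
      have h3 : r * (P + 1) + (j + m - (n + r)) = r * P + (j + m - n) := by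
        rw [Nat.mul_succ]; omega
      rw [h3]
      by_cases hjn : j < n
      · rw [if_pos hjn]
        have h4 : (j + m) % n = j + m - n := by
          rw [Nat.mod_eq_sub_mod (by omega), Nat.mod_eq_of_lt (by omega)]
        rw [h4]
      · rw [if_neg hjn]
        congr 2
        omega
  constructor
  · intro i
    show nkAux a n r w ((i + (n + r) * a ^ n) % ((n + r) * a ^ n)) =
      nkAux a n r w (i % ((n + r) * a ^ n))
    rw [Nat.add_mod_right]
  intro jf x
  have hjv : (jf : ℕ) < n + r := jf.isLt
  set c : ℕ := if (jf : ℕ) < n then 0 else (jf : ℕ) - n with hc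
  set j' : ℕ := if (jf : ℕ) < n then (jf : ℕ) else 0 with hj'
  have hj'n : j' < n := by rw [hj']; split_ifs <;> omega
  have hite : ∀ m : ℕ, m < n →
      (if (jf : ℕ) < n then ((jf : ℕ) + m) % n else (jf : ℕ) - n + m) = c + (j' + m) % n := by
    intro m hm
    rw [hc, hj']
    split_ifs with h
    · rw [Nat.zero_add]
    · rw [Nat.zero_add, Nat.mod_eq_of_lt hm]
  set y : Fin n → Fin a := fun k => x ⟨((k : ℕ) + (n - j')) % n, Nat.mod_lt _ hn0⟩ with hydef
  -- rotation lemma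
  have hrot : ∀ s : ℕ,
      (∀ m : Fin n, w (s + (j' + (m : ℕ)) % n) = x m) ↔
      (∀ k : Fin n, w (s + (k : ℕ)) = y k) := by
    intro s
    constructor
    · intro H k
      have hb : ((k : ℕ) + (n - j')) % n < n := Nat.mod_lt _ hn0
      have h5 := H ⟨((k : ℕ) + (n - j')) % n, hb⟩
      show w (s + (k : ℕ)) = x ⟨((k : ℕ) + (n - j')) % n, Nat.mod_lt _ hn0⟩
      rw [← h5]
      congr 1
      rw [Nat.add_mod_mod]
      have he : j' + ((k : ℕ) + (n - j')) = n + (k : ℕ) := by omega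
      rw [he, Nat.add_mod_left, Nat.mod_eq_of_lt k.isLt]
    · intro H m
      have hb : (j' + (m : ℕ)) % n < n := Nat.mod_lt _ hn0
      have h5 := H ⟨(j' + (m : ℕ)) % n, hb⟩
      rw [h5]
      show x ⟨((j' + (m : ℕ)) % n + (n - j')) % n, Nat.mod_lt _ hn0⟩ = x m
      congr 1
      apply Fin.ext
      show ((j' + (m : ℕ)) % n + (n - j')) % n = (m : ℕ)
      rw [Nat.mod_add_mod]
      have he : j' + (m : ℕ) + (n - j') = n + (m : ℕ) := by omega
      rw [he, Nat.add_mod_left, Nat.mod_eq_of_lt m.isLt]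
  obtain ⟨q, hq1, hq2⟩ := huniq y
  -- de Bruijn condition at arbitrary natural positions
  have hdb : ∀ s : ℕ, (∀ k : Fin n, w (s + (k : ℕ)) = y k) ↔ s % a ^ n = (q : ℕ) := by
    intro s
    constructor
    · intro H
      have hlt : s % a ^ n < a ^ n := Nat.mod_lt _ hN0
      have h6 : (⟨s % a ^ n, hlt⟩ : Fin (a ^ n)) = q := by
        apply hq2
        intro k
        show w (s % a ^ n + (k : ℕ)) = y k
        calc w (s % a ^ n + (k : ℕ)) = w ((s % a ^ n + (k : ℕ)) % a ^ n) := (hwmod _).symm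
          _ = w ((s + (k : ℕ)) % a ^ n) := by rw [Nat.mod_add_mod]
          _ = w (s + (k : ℕ)) := hwmod _
          _ = y k := H k
      exact congrArg Fin.val h6
    · intro hs k
      calc w (s + (k : ℕ)) = w ((s + (k : ℕ)) % a ^ n) := (hwmod _).symm
        _ = w ((s % a ^ n + (k : ℕ)) % a ^ n) := by rw [Nat.mod_add_mod]
        _ = w (((q : ℕ) + (k : ℕ)) % a ^ n) := by rw [hs]
        _ = w ((q : ℕ) + (k : ℕ)) := hwmod _
        _ = y k := hq1 k
  -- arithmetic: solving r * p + c ≡ q (mod a^n)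
  have hco : Nat.Coprime r (a ^ n) := (Nat.coprime_comm.mp hgcd)
  set u : (ZMod (a ^ n))ˣ := ZMod.unitOfCoprime r hco with hu'
  have hu : (u : ZMod (a ^ n)) = (r : ℕ) := ZMod.coe_unitOfCoprime r hco
  set z : ZMod (a ^ n) := (↑u⁻¹ : ZMod (a ^ n)) * (((q : ℕ) : ZMod (a ^ n)) - (c : ZMod (a ^ n)))
    with hz
  have hp0N : z.val < a ^ n := ZMod.val_lt z
  have hzmod : ∀ p : ℕ, ((r * p + c) % a ^ n = (q : ℕ)) ↔ p % a ^ n = z.val := by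
    intro p
    have hcast : ((r * p + c : ℕ) : ZMod (a ^ n)) = ((q : ℕ) : ZMod (a ^ n)) ↔
        (r * p + c) % a ^ n = (q : ℕ) % a ^ n := ZMod.natCast_eq_natCast_iff' _ _ _
    rw [Nat.mod_eq_of_lt q.isLt] at hcast
    rw [← hcast]
    have hstep : ((r * p + c : ℕ) : ZMod (a ^ n)) = ((q : ℕ) : ZMod (a ^ n)) ↔
        ((p : ℕ) : ZMod (a ^ n)) = z := by
      push_cast
      rw [← hu]
      constructor
      · intro h
        have h7 : (u : ZMod (a ^ n)) * (p : ZMod (a ^ n)) =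
            ((q : ℕ) : ZMod (a ^ n)) - (c : ZMod (a ^ n)) := eq_sub_iff_add_eq.mpr h
        rw [hz, ← h7, ← mul_assoc, u.inv_mul, one_mul]
      · intro h
        rw [h, hz, ← mul_assoc, u.mul_inv, one_mul, sub_add_cancel]
    rw [hstep]
    constructor
    · intro h
      rw [← h, ZMod.val_natCast]
    · intro h
      have h8 := congrArg (Nat.cast : ℕ → ZMod (a ^ n)) h
      rwa [ZMod.natCast_mod, ZMod.natCast_rightInverse z] at h8
  -- the key equivalence
  have key : ∀ p : ℕ,
      (∀ m : Fin n,
        nkAux a n r w ((p * (n + r) + (jf : ℕ) + (m : ℕ)) % ((n + r) * a ^ n)) = x m) ↔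
      p % a ^ n = z.val := by
    intro p
    have e1 : ∀ m : Fin n,
        nkAux a n r w ((p * (n + r) + (jf : ℕ) + (m : ℕ)) % ((n + r) * a ^ n)) =
          w (r * p + c + (j' + (m : ℕ)) % n) := by
      intro m
      rw [hwin p (jf : ℕ) (m : ℕ) hjv m.isLt, hite (m : ℕ) m.isLt, ← Nat.add_assoc]
    constructor
    · intro H
      exact (hzmod p).mp ((hdb (r * p + c)).mp ((hrot (r * p + c)).mp
        (fun m => ((e1 m).symm).trans (H m))))
    · intro H m
      exact (e1 m).trans
        (((hrot (r * p + c)).mpr ((hdb (r * p + c)).mpr ((hzmod p).mpr H))) m)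
  -- assemble the unique index
  have hbound : z.val * (n + r) + (jf : ℕ) < (n + r) * a ^ n := by
    calc z.val * (n + r) + (jf : ℕ) < (z.val + 1) * (n + r) := by
          rw [add_mul, one_mul]; omega
      _ ≤ a ^ n * (n + r) := Nat.mul_le_mul_right _ (by omega)
      _ = (n + r) * a ^ n := mul_comm _ _
  refine ⟨⟨z.val * (n + r) + (jf : ℕ), hbound⟩, ⟨?_, ?_⟩, ?_⟩
  · show (z.val * (n + r) + (jf : ℕ)) % (n + r) = (jf : ℕ)
    rw [mul_comm z.val (n + r), Nat.mul_add_mod, Nat.mod_eq_of_lt hjv]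
  · intro m
    show nkAux a n r w ((z.val * (n + r) + (jf : ℕ) + (m : ℕ)) % ((n + r) * a ^ n)) = x m
    exact (key z.val).mpr (Nat.mod_eq_of_lt hp0N) m
  · rintro i ⟨hi1, hi2⟩
    have h0 := Nat.div_add_mod (i : ℕ) (n + r)
    rw [hi1] at h0
    have hieq : (i : ℕ) = (i : ℕ) / (n + r) * (n + r) + (jf : ℕ) := by
      rw [Nat.mul_comm ((i : ℕ) / (n + r)) (n + r)]; omega
    have hplt : (i : ℕ) / (n + r) < a ^ n :=
      (Nat.div_lt_iff_lt_mul hL0).mpr (by rw [Nat.mul_comm (a ^ n) (n + r)]; exact i.isLt)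
    have hwcond : ∀ m : Fin n,
        nkAux a n r w (((i : ℕ) / (n + r) * (n + r) + (jf : ℕ) + (m : ℕ)) %
          ((n + r) * a ^ n)) = x m := by
      intro m
      have h := hi2 m
      have harg : (i : ℕ) + (m : ℕ) = (i : ℕ) / (n + r) * (n + r) + (jf : ℕ) + (m : ℕ) := by
        conv_lhs => rw [hieq]
      rw [harg] at h
      exact h
    have hpz : (i : ℕ) / (n + r) = z.val := by
      have h9 := (key _).mp hwcond
      rwa [Nat.mod_eq_of_lt hplt] at h9
    apply Fin.ext
    show (i : ℕ) = z.val * (n + r) + (jf : ℕ)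
    rw [hieq, hpz]
end

section
/- Let w = (w_0···w_{a^n−1}) be a De Bruijn cycle for {0,...,a−1}^n with a ≥ 2. For p ∈ {0,...,a^n−1} define w[p] = w_{−p}···w_{−p+n−1} w_{−p}···w_{−p+n−2} (indices mod a^n). Then the cyclic word v = (w[0]···w[a^n−1]) is an (a,n,2n−1)-perfect necklace. -/
private lemma deBruijn_aux (a n : ℕ) (ha : 2 ≤ a) (hn : 1 ≤ n) (w : ℕ → Fin a)
    (hw : IsDeBruijn a n w) (v : ℕ → Fin a)
    (hv : ∀ i : ℕ, v i =
      if i % ((2*n-1) * a^n) % (2*n-1) < n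
      then w ((a^n - i % ((2*n-1) * a^n) / (2*n-1)) + i % ((2*n-1) * a^n) % (2*n-1))
      else w ((a^n - i % ((2*n-1) * a^n) / (2*n-1)) + (i % ((2*n-1) * a^n) % (2*n-1) - n))) :
    IsPerfectNecklace a n (2*n-1) v := by
  obtain ⟨hper, hdb⟩ := hw
  unfold IsPerfectNecklace
  set N := a ^ n with hNdef
  set L := 2 * n - 1 with hLdef
  have hN : 0 < N := pow_pos (by omega) n
  have hL : 0 < L := by omega
  have hn0 : 0 < n := hn
  have hwP : Function.Periodic w N := hper
  have hcong : ∀ u u' : ℕ, u % N = u' % N → w u = w u' := by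
    intro u u' h
    rw [← hwP.map_mod_nat u, ← hwP.map_mod_nat u', h]
  have veval : ∀ P J, J < L → v (P * L + J) =
      if J < n then w (N - P % N + J) else w (N - P % N + (J - n)) := by
    intro P J hJ
    have hb : P % N * L + J < L * N := by
      calc P % N * L + J < P % N * L + L := Nat.add_lt_add_left hJ _
        _ = (P % N + 1) * L := (add_one_mul _ _).symm
        _ ≤ N * L := Nat.mul_le_mul_right L (Nat.mod_lt P hN)
        _ = L * N := Nat.mul_comm _ _
    have hmodLN : (P * L + J) % (L * N) = P % N * L + J := by
      have h1 : P * L + J = P % N * L + J + (L * N) * (P / N) := by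
        conv_lhs => rw [← Nat.mod_add_div P N]
        ring
      rw [h1, Nat.add_mul_mod_self_left, Nat.mod_eq_of_lt hb]
    have hdiv : (P % N * L + J) / L = P % N := by
      rw [Nat.mul_comm (P % N) L, Nat.mul_add_div hL, Nat.div_eq_of_lt hJ, Nat.add_zero]
    have hmodL : (P % N * L + J) % L = J := by
      rw [Nat.mul_comm (P % N) L, Nat.mul_add_mod, Nat.mod_eq_of_lt hJ]
    rw [hv, hmodLN, hdiv, hmodL]
  constructor
  · intro i
    rw [hv (i + L * N), hv i, Nat.add_mod_right]
  · intro j₀ x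
    have hj : (j₀ : ℕ) < L := j₀.isLt
    set c : ℕ := if (j₀ : ℕ) < n then 0 else 1 with hcdef
    set r : ℕ := if (j₀ : ℕ) < n then (j₀ : ℕ) else (j₀ : ℕ) - n + 1 with hrdef
    have hr : r < n := by rw [hrdef]; split <;> omega
    have hc1 : c ≤ 1 := by rw [hcdef]; split <;> omega
    set y : Fin n → Fin a := fun m => x ⟨((m : ℕ) + (n - r)) % n, Nat.mod_lt _ hn0⟩ with hydef
    obtain ⟨i₀, hi₀, hi₀u⟩ := hdb y
    have hi₀lt : (i₀ : ℕ) < N := i₀.isLt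
    -- core window computation
    have core : ∀ p, p < N → ∀ m : Fin n,
        v (p * L + (j₀ : ℕ) + (m : ℕ)) = w (2 * N - (p + c) + ((r + (m : ℕ)) % n)) := by
      intro p hp m
      have hm : (m : ℕ) < n := m.isLt
      rcases lt_or_ge ((j₀ : ℕ)) n with hjn | hjn
      · have hc0 : c = 0 := by rw [hcdef, if_pos hjn]
        have hr0 : r = (j₀ : ℕ) := by rw [hrdef, if_pos hjn]
        have hjm : (j₀ : ℕ) + (m : ℕ) < L := by omega
        rw [add_assoc, veval p _ hjm, Nat.mod_eq_of_lt hp, hc0, hr0, Nat.add_zero]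
        rcases lt_or_ge ((j₀ : ℕ) + (m : ℕ)) n with h2 | h2
        · rw [if_pos h2, Nat.mod_eq_of_lt h2]
          apply hcong
          rw [show 2 * N - p + ((j₀:ℕ) + (m:ℕ)) = (N - p + ((j₀:ℕ) + (m:ℕ))) + N by omega,
            Nat.add_mod_right]
        · rw [if_neg (not_lt.mpr h2)]
          have h3 : ((j₀:ℕ) + (m:ℕ)) % n = (j₀:ℕ) + (m:ℕ) - n := by
            rw [Nat.mod_eq_sub_mod h2, Nat.mod_eq_of_lt (by omega)]
          rw [h3]
          apply hcong
          rw [show 2*N - p + ((j₀:ℕ) + (m:ℕ) - n) = (N - p + ((j₀:ℕ) + (m:ℕ) - n)) + N by omega,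
            Nat.add_mod_right]
      · have hc0 : c = 1 := by rw [hcdef, if_neg (not_lt.mpr hjn)]
        have hr0 : r = (j₀ : ℕ) - n + 1 := by rw [hrdef, if_neg (not_lt.mpr hjn)]
        rcases lt_or_ge ((j₀ : ℕ) + (m : ℕ)) L with hb | hb
        · rw [add_assoc, veval p _ hb, Nat.mod_eq_of_lt hp,
            if_neg (not_lt.mpr (le_trans hjn (Nat.le_add_right _ _)))]
          rw [hc0, hr0, Nat.mod_eq_of_lt (show (j₀:ℕ) - n + 1 + (m:ℕ) < n by omega)]
          apply hcong
          rw [show 2*N - (p+1) + ((j₀:ℕ) - n + 1 + (m:ℕ))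
              = (N - p + ((j₀:ℕ) + (m:ℕ) - n)) + N by omega, Nat.add_mod_right]
        · have h1 : p * L + (j₀:ℕ) + (m:ℕ) = (p+1) * L + ((j₀:ℕ) + (m:ℕ) - L) := by
            rw [add_one_mul]; omega
          have hbound : (j₀:ℕ) + (m:ℕ) - L < L := by omega
          rw [h1, veval (p+1) _ hbound, if_pos (show (j₀:ℕ) + (m:ℕ) - L < n by omega)]
          rw [hc0, hr0]
          have h4 : ((j₀:ℕ) - n + 1 + (m:ℕ)) % n = (j₀:ℕ) + (m:ℕ) - L := by
            rw [Nat.mod_eq_sub_mod (by omega), Nat.mod_eq_of_lt (by omega)]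
            omega
          rw [h4]
          apply hcong
          rcases Nat.lt_or_ge (p+1) N with hp1 | hp1
          · rw [Nat.mod_eq_of_lt hp1,
              show 2*N - (p+1) + ((j₀:ℕ)+(m:ℕ)-L) = (N - (p+1) + ((j₀:ℕ)+(m:ℕ)-L)) + N by omega,
              Nat.add_mod_right]
          · have hpe : p + 1 = N := by omega
            rw [hpe, Nat.mod_self]
            congr 1
            omega
    -- key reformulation
    have key : ∀ p, p < N →
        ((∀ m : Fin n, v (p * L + (j₀:ℕ) + (m:ℕ)) = x m) ↔ (2*N - (p + c)) % N = (i₀:ℕ)) := by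
      intro p hp
      constructor
      · intro h
        have hB : ∀ m : Fin n, w (2*N - (p+c) + ((r + (m:ℕ)) % n)) = x m := by
          intro m; rw [← core p hp m]; exact h m
        have hC : ∀ m : Fin n, w ((2*N - (p+c)) % N + (m:ℕ)) = y m := by
          intro m
          have e1 : (r + ((m:ℕ) + (n - r)) % n) % n = (m:ℕ) := by
            rw [Nat.add_mod_mod, show r + ((m:ℕ) + (n - r)) = (m:ℕ) + n by omega,
              Nat.add_mod_right]
            exact Nat.mod_eq_of_lt m.isLt
          have h5 := hB ⟨((m:ℕ) + (n - r)) % n, Nat.mod_lt _ hn0⟩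
          rw [show ((⟨((m:ℕ) + (n - r)) % n, Nat.mod_lt _ hn0⟩ : Fin n) : ℕ)
              = ((m:ℕ) + (n - r)) % n from rfl, e1] at h5
          exact (hcong _ _ (Nat.mod_add_mod _ _ _)).trans h5
        exact congrArg Fin.val (hi₀u ⟨(2*N - (p+c)) % N, Nat.mod_lt _ hN⟩ hC)
      · intro hE m
        rw [core p hp m]
        have e2 : ((r + (m:ℕ)) % n + (n - r)) % n = (m:ℕ) := by
          rw [Nat.mod_add_mod, show r + (m:ℕ) + (n - r) = (m:ℕ) + n by omega,
            Nat.add_mod_right]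
          exact Nat.mod_eq_of_lt m.isLt
        have h1 : w ((2*N - (p+c)) % N + ((r + (m:ℕ)) % n))
            = y ⟨(r + (m:ℕ)) % n, Nat.mod_lt _ hn0⟩ := by
          rw [hE]
          exact hi₀ ⟨(r + (m:ℕ)) % n, Nat.mod_lt _ hn0⟩
        calc w (2*N - (p+c) + ((r + (m:ℕ)) % n))
            = w ((2*N - (p+c)) % N + ((r + (m:ℕ)) % n)) :=
              hcong _ _ (Nat.mod_add_mod _ _ _).symm
          _ = y ⟨(r + (m:ℕ)) % n, Nat.mod_lt _ hn0⟩ := h1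
          _ = x m := congrArg x (Fin.ext e2)
    -- the unique solution
    set p₀ : ℕ := if (i₀:ℕ) + c = 0 then 0 else N - (i₀:ℕ) - c with hp₀def
    have hp₀N : p₀ < N := by rw [hp₀def]; split <;> omega
    have hp₀E : (2*N - (p₀ + c)) % N = (i₀:ℕ) := by
      rcases Nat.eq_zero_or_pos ((i₀:ℕ) + c) with h0 | h0
      · have hz : p₀ = 0 := by rw [hp₀def, if_pos h0]
        have hc0 : c = 0 := by omega
        have hi0 : (i₀:ℕ) = 0 := by omega
        rw [hz, hc0, hi0, show 2*N - (0+0) = 0 + N*2 by omega, Nat.add_mul_mod_self_left,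
          Nat.zero_mod]
      · have hpv : p₀ = N - (i₀:ℕ) - c := by rw [hp₀def, if_neg (by omega)]
        rw [hpv, show 2*N - (N - (i₀:ℕ) - c + c) = (i₀:ℕ) + N by omega, Nat.add_mod_right,
          Nat.mod_eq_of_lt hi₀lt]
    have hp₀U : ∀ p, p < N → (2*N - (p + c)) % N = (i₀:ℕ) → p = p₀ := by
      intro p hp hE
      rcases Nat.eq_zero_or_pos (p + c) with h0 | h0
      · have h1 : (2*N - (p+c)) % N = 0 := by
          rw [show 2*N - (p+c) = 0 + N*2 by omega, Nat.add_mul_mod_self_left, Nat.zero_mod]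
        rw [hp₀def, if_pos (by omega)]
        omega
      · have h1 : (2*N - (p+c)) % N = N - (p+c) := by
          rw [show 2*N - (p+c) = (N - (p+c)) + N by omega, Nat.add_mod_right,
            Nat.mod_eq_of_lt (by omega)]
        rw [hp₀def, if_neg (by omega)]
        omega
    refine ⟨⟨p₀ * L + (j₀:ℕ), ?_⟩, ⟨?_, ?_⟩, ?_⟩
    · calc p₀ * L + (j₀:ℕ) < p₀ * L + L := Nat.add_lt_add_left hj _
        _ = (p₀ + 1) * L := (add_one_mul _ _).symm
        _ ≤ N * L := Nat.mul_le_mul_right L hp₀N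
        _ = L * N := Nat.mul_comm _ _
    · show (p₀ * L + (j₀:ℕ)) % L = (j₀:ℕ)
      rw [Nat.mul_comm p₀ L, Nat.mul_add_mod, Nat.mod_eq_of_lt hj]
    · exact (key p₀ hp₀N).mpr hp₀E
    · rintro i' ⟨h1, h2⟩
      have hpl : (i':ℕ) / L < N :=
        (Nat.div_lt_iff_lt_mul hL).mpr (by rw [Nat.mul_comm N L]; exact i'.isLt)
      have hsplit : (i':ℕ) = (i':ℕ) / L * L + (j₀:ℕ) := by
        rw [Nat.mul_comm ((i':ℕ) / L) L, ← h1]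
        exact (Nat.div_add_mod _ _).symm
      have hE' : (2*N - ((i':ℕ)/L + c)) % N = (i₀:ℕ) := by
        refine (key _ hpl).mp ?_
        intro m
        have h3 := h2 m
        rw [hsplit] at h3
        exact h3
      have h4 := hp₀U _ hpl hE'
      apply Fin.ext
      show (i':ℕ) = p₀ * L + (j₀:ℕ)
      rw [hsplit, h4]

/-- Given a De Bruijn cycle `w` for `{0,…,a-1}^n` with `a ≥ 2`, the cyclic word with
`p`-th block `w_{-p} ⋯ w_{-p+n-1} w_{-p} ⋯ w_{-p+n-2}` (indices mod `a^n`, with `-p`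
represented as `a^n - p` and handled by periodicity) is an `(a, n, 2n - 1)`-perfect
necklace. -/
theorem deBruijn_negShift_isPerfectNecklace (a n : ℕ) (ha : 2 ≤ a) (hn : 1 ≤ n)
    (w : ℕ → Fin a) (hw : IsDeBruijn a n w) :
    IsPerfectNecklace a n (2 * n - 1) (fun i =>
      let L := 2 * n - 1
      let i' := i % (L * a ^ n)
      let p := i' / L
      let j := i' % L
      if j < n then w ((a ^ n - p) + j) else w ((a ^ n - p) + (j - n))) := by
  exact deBruijn_aux a n ha hn w hw _ (fun i => rfl)
end

section
/- For all positive integers a, n, t there exists an (a,n,t)-perfect necklace. -/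
namespace Cycle.Chain

variable {α : Type*} {r : α → α → Prop} {l : List α}

theorem exists_isRotated_isChain_getLast? (h : Cycle.Chain r (l : Cycle α)) {x : α}
    (hx : x ∈ l) :
    ∃ l' : List α, l' ~r l ∧ l'.IsChain r ∧ l'.getLast? = some x := by
  obtain ⟨s, u, rfl⟩ := List.append_of_mem hx
  have hrot : x :: (u ++ s) ~r s ++ x :: u := by
    simpa using (List.isRotated_append (l := s) (l' := x :: u)).symm
  rw [← Cycle.coe_eq_coe.mpr hrot, Cycle.chain_coe_cons] at h
  exact ⟨u ++ s ++ [x], (List.isRotated_append (l := [x]) (l' := u ++ s)).symm.trans hrot,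
    h.tail, by simp⟩

theorem rel_getElem_mod (h : Cycle.Chain r (l : Cycle α)) (i : ℕ) (hi : i < l.length) :
    r l[i] (l[(i + 1) % l.length]'(Nat.mod_lt _ (by omega))) := by
  have hne : l ≠ [] := List.ne_nil_of_length_pos (by omega)
  have hchain := List.isChain_iff_getElem.mp ((Cycle.chain_ne_nil r hne).mp h)
  rcases Nat.lt_or_ge (i + 1) l.length with hlt | hge
  · have := hchain (i + 1) (by simpa using hlt)
    simp only [List.getElem_cons_succ] at this
    simpa only [Nat.mod_eq_of_lt hlt] using this
  · have hwrap : (i + 1) % l.length = 0 := by rw [show i + 1 = l.length by omega, Nat.mod_self]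
    have := hchain 0 (by simp; omega)
    simp only [List.getElem_cons_zero, List.getElem_cons_succ, List.getLast_eq_getElem] at this
    obtain rfl : i = l.length - 1 := by omega
    simpa only [hwrap] using this

end Cycle.Chain

namespace Eulerian

variable {E V : Type*}

theorem map_src_append_tgt_getLast (src tgt : E → V) {c : List E}
    (hch : c.IsChain fun e f => tgt e = src f) (hc : c ≠ []) :
    c.map src ++ [tgt (c.getLast hc)] = src (c.head hc) :: c.map tgt := by
  induction c with
  | nil => exact absurd rfl hc
  | cons e l ih =>
    cases l with
    | nil => rfl
    | cons f l =>
      obtain ⟨hef, hch⟩ := List.isChain_cons_cons.mp hch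
      have := ih hch (List.cons_ne_nil _ _)
      simp_all

def IsTrail (src tgt : E → V) (c : List E) : Prop :=
  c.Nodup ∧ c.IsChain fun e f => tgt e = src f

theorem IsTrail.concat {src tgt : E → V} {c : List E} (hc : IsTrail src tgt c) {g : E}
    (hg : g ∉ c) (hlast : ∀ e ∈ c.getLast?, tgt e = src g) : IsTrail src tgt (c ++ [g]) :=
  ⟨hc.1.append (List.nodup_singleton g) (by simpa using hg),
    hc.2.append (List.isChain_singleton g) (by simpa using hlast)⟩

variable [Fintype E]

theorem exists_isTrail_forall_length_le (src tgt : E → V) :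
    ∃ c, IsTrail src tgt c ∧ ∀ d, IsTrail src tgt d → d.length ≤ c.length :=
  Set.exists_max_image {c | IsTrail src tgt c} List.length
    ((List.finite_length_le _ (Fintype.card E)).subset fun _ hc => hc.1.length_le_card)
    ⟨[], List.nodup_nil, List.IsChain.nil⟩

variable [DecidableEq V]

theorem count_map_le_card (f : E → V) {c : List E} (hnd : c.Nodup) (v : V) :
    (c.map f).count v ≤ Fintype.card {e // f e = v} := by
  classical
  rw [List.count_eq_countP, List.countP_map, Fintype.card_subtype, List.countP_eq_length_filter,
    ← List.toFinset_card_of_nodup (hnd.filter _)]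
  exact Finset.card_le_card fun e he => by simp_all

theorem card_le_count_map (f : E → V) {c : List E} {v : V} (hc : ∀ e, f e = v → e ∈ c) :
    Fintype.card {e // f e = v} ≤ (c.map f).count v := by
  classical
  rw [List.count_eq_countP, List.countP_map, Fintype.card_subtype, List.countP_eq_length_filter]
  exact (Finset.card_le_card fun e he => by simp_all).trans (List.toFinset_card_le _)

variable {src tgt : E → V}
  (hbal : ∀ v, Fintype.card {e // src e = v} = Fintype.card {e // tgt e = v})
include hbal

theorem IsTrail.tgt_getLast_eq_src_head {c : List E} (hc : IsTrail src tgt c) (hne : c ≠ [])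
    (hmax : ∀ e, src e = tgt (c.getLast hne) → e ∈ c) :
    tgt (c.getLast hne) = src (c.head hne) := by
  by_contra hopen
  have hcount := congrArg (List.count (tgt (c.getLast hne)))
    (map_src_append_tgt_getLast src tgt hc.2 hne)
  simp only [List.count_append, List.count_cons, List.count_nil, beq_self_eq_true, beq_iff_eq,
    Ne.symm hopen, if_true, if_false] at hcount
  have := hbal (tgt (c.getLast hne))
  have := card_le_count_map src hmax
  have := count_map_le_card tgt hc.1 (tgt (c.getLast hne))
  omega

theorem exists_eulerian_circuit
    (hconn : ∀ u w, Relation.ReflTransGen (fun u w => ∃ e, src e = u ∧ tgt e = w) u w) :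
    ∃ c : List E, c.Nodup ∧ (∀ e, e ∈ c) ∧
      Cycle.Chain (fun e f => tgt e = src f) (c : Cycle E) := by
  obtain ⟨c, hc, hlongest⟩ := exists_isTrail_forall_length_le src tgt
  have hstuck : ∀ g ∉ c, ¬∀ e ∈ c.getLast?, tgt e = src g := fun g hg hlast =>
    (hlongest _ (hc.concat hg hlast)).not_gt (by simp)
  rcases eq_or_ne c [] with rfl | hne
  · exact ⟨[], List.nodup_nil, fun e => by_contra fun he => hstuck e he (by simp),
      Cycle.Chain.nil _⟩
  have hclosed := hc.tgt_getLast_eq_src_head hbal hne fun e he =>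
    by_contra fun hec => hstuck e hec (by simp [List.getLast?_eq_some_getLast hne, he])
  have hcycle : Cycle.Chain (fun e f => tgt e = src f) (c : Cycle E) :=
    (Cycle.chain_ne_nil _ hne).mpr (hc.2.cons_of_ne_nil hne hclosed)
  -- Rotating `c` to end at `e` and appending `g` would give a longer trail.
  have hattach : ∀ e ∈ c, ∀ g, tgt e = src g → g ∈ c := by
    intro e he g heg
    by_contra hg
    obtain ⟨d, hdc, hd, hlast⟩ := hcycle.exists_isRotated_isChain_getLast? he
    have := hlongest _ (IsTrail.concat ⟨hdc.nodup_iff.mpr hc.1, hd⟩ (mt hdc.mem_iff.mp hg)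
      (by simpa [hlast] using heg))
    simp [hdc.perm.length_eq] at this
  have hreach : ∀ w, Relation.ReflTransGen (fun u w => ∃ e, src e = u ∧ tgt e = w)
      (tgt (c.head hne)) w → ∃ e ∈ c, tgt e = w := by
    intro w hw
    induction hw with
    | refl => exact ⟨_, List.head_mem hne, rfl⟩
    | tail _ hstep ih =>
      obtain ⟨e, he, rfl⟩ := ih
      obtain ⟨g, heg, rfl⟩ := hstep
      exact ⟨g, hattach e he g heg.symm, rfl⟩
  refine ⟨c, hc.1, fun f => ?_, hcycle⟩
  obtain ⟨e, he, hef⟩ := hreach (src f) (hconn _ _)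
  exact hattach e he f hef

theorem exists_eulerian_sequence [Nonempty E]
    (hconn : ∀ u w, Relation.ReflTransGen (fun u w => ∃ e, src e = u ∧ tgt e = w) u w) :
    ∃ ρ : ℕ → E, Function.Periodic ρ (Fintype.card E) ∧
      Function.Bijective (fun i : Fin (Fintype.card E) => ρ i) ∧
      ∀ i, tgt (ρ i) = src (ρ (i + 1)) := by
  classical
  obtain ⟨l, hnd, hall, hcycle⟩ := exists_eulerian_circuit hbal hconn
  let circuit := hnd.getEquivOfForallMemList l hall
  have hlen : l.length = Fintype.card E := by simpa using Fintype.card_congr circuit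
  rw [← hlen]
  have hpos : 0 < l.length := List.length_pos_of_mem (hall (Classical.arbitrary E))
  refine ⟨fun i => (l[i % l.length]'(Nat.mod_lt _ hpos)), fun i => by simp, ?_, fun i => ?_⟩
  · convert circuit.bijective using 2 with i
    simp [circuit, Nat.mod_eq_of_lt i.isLt]
  · simpa [Nat.add_mod] using hcycle.rel_getElem_mod (i % l.length) (Nat.mod_lt _ hpos)

end Eulerian

theorem eq_apply_zero_of_tail_eq_init {α : Type*} {k : ℕ} (x : ℕ → Fin (k + 1) → α)
    (hx : ∀ i, Fin.tail (x i) = Fin.init (x (i + 1))) (i : ℕ) (m : Fin (k + 1)) :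
    x i m = x (i + m) 0 := by
  induction m using Fin.induction generalizing i with
  | zero => simp
  | succ m ih =>
    have := congrFun (hx i) m
    simp only [Fin.tail, Fin.init] at this
    rw [this, ih]
    simp [add_assoc, add_comm 1]

namespace AstuteGraph

variable {a k t : ℕ}

/- The astute graph `G(a, k, t)`: the edge `(xvy, s)`, with letters `x` and `y`, runs from `(xv, s)`
to `(vy, s + 1)`. -/
def src (e : (Fin (k + 1) → Fin a) × ZMod t) : (Fin k → Fin a) × ZMod t := (Fin.init e.1, e.2)

def tgt (e : (Fin (k + 1) → Fin a) × ZMod t) : (Fin k → Fin a) × ZMod t :=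
  (Fin.tail e.1, e.2 + 1)

theorem reflTransGen_window (x : ℕ → Fin a) (i : ℕ) (s : ZMod t) (m : ℕ) :
    Relation.ReflTransGen (fun u w => ∃ e, src e = u ∧ tgt e = w)
      (fun j : Fin k => x (i + j), s) (fun j : Fin k => x (i + m + j), s + m) := by
  induction m with
  | zero => simpa using Relation.ReflTransGen.refl
  | succ m ih =>
    refine ih.tail ⟨(fun j : Fin (k + 1) => x (i + m + j), s + m), rfl,
      Prod.ext (funext fun j => ?_) ?_⟩
    · simp [tgt, Fin.tail, add_assoc, add_comm 1]
    · simp [tgt, add_assoc]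

theorem reflTransGen [NeZero t] (ha : 0 < a) (p q : (Fin k → Fin a) × ZMod t) :
    Relation.ReflTransGen (fun u w => ∃ e, src e = u ∧ tgt e = w) p q := by
  obtain ⟨u, s⟩ := p
  obtain ⟨w, s'⟩ := q
  set j := (s' - s - k).val
  let x : ℕ → Fin a := fun m =>
    if hu : m < k then u ⟨m, hu⟩
    else if hw : m - (k + j) < k then w ⟨m - (k + j), hw⟩ else ⟨0, ha⟩
  have hu : (fun i : Fin k => x (0 + i)) = u := by funext i; simp [x]
  have hw : (fun i : Fin k => x (0 + (k + j) + i)) = w := by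
    funext i
    simp [x, show ¬k + j + (i : ℕ) < k by omega]
  have hs : s + ((k + j : ℕ) : ZMod t) = s' := by simp [j]
  have h := reflTransGen_window (k := k) x 0 s (k + j)
  rwa [hu, hw, hs] at h

theorem card_src_fiber [NeZero t] (v : (Fin k → Fin a) × ZMod t) :
    Fintype.card {e // src e = v} = a := by
  refine (Fintype.card_congr ?_).trans (Fintype.card_fin a)
  exact
    { toFun e := e.1.1 (Fin.last k)
      invFun y := ⟨(Fin.snoc v.1 y, v.2), by simp [src]⟩
      left_inv := by rintro ⟨⟨w, s⟩, rfl⟩; simp [src, Fin.snoc_init_self]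
      right_inv y := by simp }

theorem card_tgt_fiber [NeZero t] (v : (Fin k → Fin a) × ZMod t) :
    Fintype.card {e // tgt e = v} = a := by
  refine (Fintype.card_congr ?_).trans (Fintype.card_fin a)
  exact
    { toFun e := e.1.1 0
      invFun y := ⟨(Fin.cons y v.1, v.2 - 1), by simp [tgt]⟩
      left_inv := by rintro ⟨⟨w, s⟩, rfl⟩; simp [tgt, Fin.cons_self_tail]
      right_inv y := by simp }

theorem card_edge [NeZero t] :
    Fintype.card ((Fin (k + 1) → Fin a) × ZMod t) = t * a ^ (k + 1) := by
  simp [mul_comm]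

theorem isPerfectNecklace {ρ : ℕ → (Fin (k + 1) → Fin a) × ZMod t}
    (hper : Function.Periodic ρ (t * a ^ (k + 1)))
    (hbij : Function.Bijective fun i : Fin (t * a ^ (k + 1)) => ρ i)
    (hstep : ∀ i, tgt (ρ i) = src (ρ (i + 1))) :
    IsPerfectNecklace a (k + 1) t fun i => (ρ i).1 0 := by
  have hword : ∀ i (m : Fin (k + 1)), (ρ i).1 m = (ρ (i + m)).1 0 :=
    eq_apply_zero_of_tail_eq_init (fun i => (ρ i).1) fun i => congrArg Prod.fst (hstep i)
  have hlabel : ∀ i : ℕ, (ρ i).2 = (ρ 0).2 + i := by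
    intro i
    induction i with
    | zero => simp
    | succ i ih =>
      have hsnd : (ρ i).2 + 1 = (ρ (i + 1)).2 := congrArg Prod.snd (hstep i)
      rw [← hsnd, ih]
      push_cast
      ring
  refine ⟨fun i => congrArg (fun e => e.1 0) (hper i), fun j w => ?_⟩
  have hiff : ∀ i : Fin (t * a ^ (k + 1)), ρ i = (w, (ρ 0).2 + (j : ℕ)) ↔
      (i : ℕ) % t = j ∧ ∀ m : Fin (k + 1), (ρ (i + m)).1 0 = w m := by
    intro i
    simp only [Prod.ext_iff, funext_iff, ← hword, hlabel i, add_right_inj,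
      ZMod.natCast_eq_natCast_iff', Nat.mod_eq_of_lt j.isLt]
    exact and_comm
  exact (existsUnique_congr hiff).mp (hbij.existsUnique _)

end AstuteGraph

/-- For all positive integers `a`, `n`, `t` there exists an `(a, n, t)`-perfect
necklace. -/
theorem exists_perfectNecklace (a n t : ℕ) (ha : 0 < a) (hn : 0 < n) (ht : 0 < t) :
    ∃ v : ℕ → Fin a, IsPerfectNecklace a n t v := by
  obtain ⟨k, rfl⟩ : ∃ k, n = k + 1 := ⟨n - 1, by omega⟩
  have : NeZero t := ⟨ht.ne'⟩
  have : Nonempty ((Fin (k + 1) → Fin a) × ZMod t) := ⟨(fun _ => ⟨0, ha⟩, 0)⟩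
  obtain ⟨ρ, hper, hbij, hstep⟩ :=
    Eulerian.exists_eulerian_sequence (src := @AstuteGraph.src a k t) (tgt := AstuteGraph.tgt)
      (fun v => by rw [AstuteGraph.card_src_fiber, AstuteGraph.card_tgt_fiber])
      (AstuteGraph.reflTransGen ha)
  rw [AstuteGraph.card_edge] at hper hbij
  exact ⟨_, AstuteGraph.isPerfectNecklace hper hbij hstep⟩
end

section
/- For all integers a ≥ 1, n ≥ 1, t ≥ 1, there exists an (a,n,t)-perfect necklace whose first t characters are all zero. -/
open Finset

theorem List.Nodup.countP_le_card_filter {α : Type*} [Fintype α] {L : List α} (hL : L.Nodup)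
    (p : α → Prop) [DecidablePred p] : L.countP p ≤ #{e | p e} := by
  classical
  rw [← hL.card_eq_countP]
  exact card_le_card (filter_subset_filter _ (subset_univ _))

theorem List.Nodup.countP_eq_card_filter {α : Type*} [Fintype α] {L : List α} (hL : L.Nodup)
    (p : α → Prop) [DecidablePred p] (hp : ∀ e, p e → e ∈ L) : L.countP p = #{e | p e} := by
  classical
  rw [← hL.card_eq_countP]
  congr 1
  ext e
  simpa using hp e

theorem List.IsChain.cycle_chain {α : Type*} {r : α → α → Prop} {L : List α}
    (h : L.IsChain r) (hL : L ≠ []) (hclose : r (L.getLast hL) (L.head hL)) :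
    Cycle.Chain r (L : Cycle α) :=
  (Cycle.chain_ne_nil r hL).2 (List.isChain_cons.2 ⟨by simpa [List.head?_eq_some_head hL], h⟩)

theorem Cycle.Chain.exists_isRotated_cons {α : Type*} {r : α → α → Prop} {L : List α}
    (h : Cycle.Chain r (L : Cycle α)) {a : α} (ha : a ∈ L) :
    ∃ l, L ~r a :: l ∧ List.IsChain r (a :: (l ++ [a])) := by
  obtain ⟨A, B, rfl⟩ := List.append_of_mem ha
  have hrot : A ++ a :: B ~r a :: (B ++ A) := List.isRotated_append
  refine ⟨B ++ A, hrot, ?_⟩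
  rw [← Cycle.chain_coe_cons, ← Cycle.coe_eq_coe.2 hrot]
  exact h

theorem Cycle.Chain.exists_rel_of_mem {α : Type*} {r : α → α → Prop} {L : List α}
    (h : Cycle.Chain r (L : Cycle α)) {a : α} (ha : a ∈ L) : ∃ b ∈ L, r a b := by
  obtain ⟨l, hrot, hchain⟩ := h.exists_isRotated_cons ha
  cases l with
  | nil => exact ⟨a, ha, by simpa using hchain⟩
  | cons b l => exact ⟨b, hrot.perm.mem_iff.2 (by simp), (List.isChain_cons_cons.1 hchain).1⟩

theorem Cycle.Chain.rel_getElem_mod_s6 {α : Type*} {r : α → α → Prop} {L : List α}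
    (h : Cycle.Chain r (L : Cycle α)) (hL : 0 < L.length) (i : ℕ) :
    r (L[i % L.length]'(Nat.mod_lt _ hL)) (L[(i + 1) % L.length]'(Nat.mod_lt _ hL)) := by
  have hne : L ≠ [] := List.ne_nil_of_length_pos hL
  rw [Cycle.chain_ne_nil r hne, List.isChain_iff_getElem] at h
  have hi := Nat.mod_lt i hL
  have hsucc : (i + 1) % L.length = (i % L.length + 1) % L.length := (Nat.mod_add_mod i _ 1).symm
  rcases Nat.lt_or_ge (i % L.length + 1) L.length with hlt | hge
  · simp_rw [hsucc, Nat.mod_eq_of_lt hlt]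
    have := h (i % L.length + 1) (by simpa using hlt)
    rwa [List.getElem_cons_succ, List.getElem_cons_succ] at this
  · have hlast : i % L.length = L.length - 1 := by omega
    simp_rw [hsucc, show i % L.length + 1 = L.length by omega, Nat.mod_self, hlast]
    simpa [List.getLast_eq_getElem] using h 0 (by simpa using hL)

namespace Multigraph

variable {E V : Type*} (src tgt : E → V)

def Composable (e f : E) : Prop := tgt e = src f

def Adj (u v : V) : Prop := ∃ e, src e = u ∧ tgt e = v

def IsBalanced [Fintype E] [DecidableEq V] : Prop :=
  ∀ v, #{e | src e = v} = #{e | tgt e = v}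

variable {src tgt}

theorem isBalanced_of_equiv [Fintype E] [DecidableEq V] (σ : E ≃ E)
    (hσ : ∀ e, tgt e = src (σ e)) : IsBalanced src tgt := fun v =>
  (Finset.card_equiv σ fun e => by simp [hσ]).symm

theorem map_src_eq_cons_map_tgt_dropLast :
    ∀ (L : List E) (hL : L ≠ []), L.IsChain (Composable src tgt) →
      L.map src = src (L.head hL) :: L.dropLast.map tgt
  | [e], _, _ => rfl
  | e :: f :: L, _, hc => by
    rw [List.isChain_cons_cons] at hc
    rw [List.map_cons, map_src_eq_cons_map_tgt_dropLast (f :: L) (List.cons_ne_nil _ _) hc.2,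
      List.dropLast_cons_cons, List.map_cons, List.head_cons, List.head_cons, hc.1]

/-- Along a trail, the end vertex is entered once more than it is left, unless the trail is
closed. -/
theorem composable_getLast_head [Fintype E] [DecidableEq V] (hbal : IsBalanced src tgt)
    {L : List E} (hnd : L.Nodup) (hch : L.IsChain (Composable src tgt)) (hL : L ≠ [])
    (hout : ∀ g, src g = tgt (L.getLast hL) → g ∈ L) :
    Composable src tgt (L.getLast hL) (L.head hL) := by
  set v := tgt (L.getLast hL)
  have hsrc : L.countP (src · = v) =
      (if src (L.head hL) = v then 1 else 0) + L.dropLast.countP (tgt · = v) := by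
    have := congrArg (List.countP (· = v)) (map_src_eq_cons_map_tgt_dropLast L hL hch)
    simp only [List.countP_map, List.countP_cons] at this
    simpa [Function.comp_def, add_comm] using this
  have htgt : L.countP (tgt · = v) = L.dropLast.countP (tgt · = v) + 1 := by
    conv_lhs => rw [← List.dropLast_append_getLast hL]
    simp [v]
  have hout_eq := hnd.countP_eq_card_filter (src · = v) hout
  have hin_le := hnd.countP_le_card_filter (tgt · = v)
  have := hbal v
  by_contra hne
  rw [if_neg (Ne.symm hne)] at hsrc
  omega

theorem exists_unused_edge_of_cycle_chain
    (hconn : ∀ e e', Relation.ReflTransGen (Adj src tgt) (tgt e) (src e'))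
    {L : List E} (hL : Cycle.Chain (Composable src tgt) (L : Cycle E)) {e₁ g₀ : E}
    (he₁ : e₁ ∈ L) (hg₀ : g₀ ∉ L) : ∃ e ∈ L, ∃ g ∉ L, src g = src e := by
  have key : ∀ y, Relation.ReflTransGen (Adj src tgt) (tgt e₁) y →
      (∃ e ∈ L, src e = y) ∨ ∃ e ∈ L, ∃ g ∉ L, src g = src e := by
    intro y hy
    induction hy with
    | refl =>
      obtain ⟨f, hf, hcomp⟩ := hL.exists_rel_of_mem he₁
      exact Or.inl ⟨f, hf, hcomp.symm⟩
    | tail _ hstep ih =>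
      obtain ⟨g, rfl, rfl⟩ := hstep
      rcases ih with ⟨e, he, hse⟩ | h
      · by_cases hg : g ∈ L
        · obtain ⟨f, hf, hcomp⟩ := hL.exists_rel_of_mem hg
          exact Or.inl ⟨f, hf, hcomp.symm⟩
        · exact Or.inr ⟨e, he, g, hg, hse.symm⟩
      · exact Or.inr h
  rcases key _ (hconn e₁ g₀) with ⟨e, he, hse⟩ | h
  · exact ⟨e, he, g₀, hg₀, hse.symm⟩
  · exact h

section Eulerian

variable [Fintype E] [DecidableEq V] (hbal : IsBalanced src tgt)
  (hconn : ∀ e e', Relation.ReflTransGen (Adj src tgt) (tgt e) (src e'))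
include hbal hconn

theorem exists_trail_length_succ {L : List E} (hnd : L.Nodup)
    (hch : L.IsChain (Composable src tgt)) (hunused : ∃ g, g ∉ L) :
    ∃ L' : List E, L'.Nodup ∧ L'.IsChain (Composable src tgt) ∧ L'.length = L.length + 1 := by
  obtain ⟨g₀, hg₀⟩ := hunused
  rcases eq_or_ne L [] with rfl | hL
  · exact ⟨[g₀], List.nodup_singleton _, List.isChain_singleton _, rfl⟩
  by_cases hout : ∀ g, src g = tgt (L.getLast hL) → g ∈ L
  · have hcyc := hch.cycle_chain hL (composable_getLast_head hbal hnd hch hL hout)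
    obtain ⟨e, he, g, hg, hge⟩ :=
      exists_unused_edge_of_cycle_chain hconn hcyc (List.getLast_mem hL) hg₀
    obtain ⟨l, hrot, hchain⟩ := hcyc.exists_isRotated_cons he
    refine ⟨e :: l ++ [g], ?_, ?_, by simp [hrot.perm.length_eq]⟩
    · exact List.nodup_append_comm.2
        (List.nodup_cons.2 ⟨fun h => hg (hrot.perm.mem_iff.2 h), hrot.nodup_iff.1 hnd⟩)
    · rw [← List.cons_append] at hchain
      rw [List.isChain_append] at hchain ⊢
      refine ⟨hchain.1, List.isChain_singleton _, fun x hx y hy => ?_⟩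
      simp only [List.head?_cons, Option.mem_some_iff] at hy
      subst hy
      exact (hchain.2.2 x hx e rfl).trans hge.symm
  · push Not at hout
    obtain ⟨g, hsrc, hg⟩ := hout
    refine ⟨L ++ [g], List.nodup_append_comm.2 (List.nodup_cons.2 ⟨hg, hnd⟩), ?_, by simp⟩
    refine List.isChain_append.2 ⟨hch, List.isChain_singleton _, fun x hx y hy => ?_⟩
    rw [List.getLast?_eq_some_getLast hL, Option.mem_some_iff] at hx
    simp only [List.head?_cons, Option.mem_some_iff] at hy
    subst hx hy
    exact hsrc.symm

theorem exists_trail_of_length (k : ℕ) (hk : k ≤ Fintype.card E) :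
    ∃ L : List E, L.Nodup ∧ L.IsChain (Composable src tgt) ∧ L.length = k := by
  induction k with
  | zero => exact ⟨[], List.nodup_nil, List.isChain_nil, rfl⟩
  | succ k ih =>
    obtain ⟨L, hnd, hch, rfl⟩ := ih (by omega)
    refine exists_trail_length_succ hbal hconn hnd hch ?_
    by_contra! hall
    have : Fintype.card E ≤ L.length := by
      classical
      rw [← Finset.card_univ, ← List.toFinset_card_of_nodup hnd]
      exact card_le_card fun e _ => List.mem_toFinset.2 (hall e)
    omega

theorem exists_eulerian_circuit :
    ∃ L : List E, L.Nodup ∧ (∀ e, e ∈ L) ∧ Cycle.Chain (Composable src tgt) (L : Cycle E) := by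
  classical
  obtain ⟨L, hnd, hch, hlen⟩ := exists_trail_of_length hbal hconn _ le_rfl
  have hall : ∀ e, e ∈ L := by
    have := Finset.eq_univ_of_card L.toFinset (by rw [List.toFinset_card_of_nodup hnd, hlen])
    simpa [Finset.eq_univ_iff_forall] using this
  refine ⟨L, hnd, hall, ?_⟩
  rcases eq_or_ne L [] with rfl | hL
  · exact Cycle.Chain.nil _
  · exact hch.cycle_chain hL (composable_getLast_head hbal hnd hch hL fun g _ => hall g)

end Eulerian

end Multigraph

namespace PerfectNecklace

open Multigraph Fin.NatCast

variable {a t m : ℕ} [NeZero t]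

abbrev Vertex (a t m : ℕ) := Fin t × (Fin m → Fin a)

abbrev Word (a t m : ℕ) := Fin t × (Fin (m + 1) → Fin a)

def wordSrc (p : Word a t m) : Vertex a t m := (p.1, Fin.init p.2)

def wordTgt (p : Word a t m) : Vertex a t m := (p.1 + 1, Fin.tail p.2)

def windowVertex (s : ℕ → Fin a) (j : Fin t) (k : ℕ) : Vertex a t m :=
  (j + k, fun i => s (k + i))

def windowWord (s : ℕ → Fin a) (j : Fin t) (k : ℕ) : Word a t m :=
  (j + k, fun i => s (k + i))

theorem eq_windowWord_of_consecutive {G : ℕ → Word a t m}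
    (hG : ∀ i, Composable wordSrc wordTgt (G i) (G (i + 1))) (i : ℕ) :
    G i = windowWord (fun k => (G k).2 0) (G 0).1 i := by
  have hfst : ∀ i, (G i).1 = (G 0).1 + i := by
    intro i
    induction i with
    | zero => simp
    | succ i ih => rw [Nat.cast_succ, ← add_assoc, ← ih]; exact (congrArg Prod.fst (hG i)).symm
  have hsnd : ∀ (k : ℕ) (hk : k < m + 1) i, (G i).2 ⟨k, hk⟩ = (G (i + k)).2 0 := by
    intro k
    induction k with
    | zero => intro _ i; rfl
    | succ k ih =>
      intro hk i
      have := congrFun (congrArg Prod.snd (hG i)) ⟨k, by omega⟩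
      simp only [wordTgt, wordSrc, Fin.tail, Fin.init] at this
      rw [show i + (k + 1) = i + 1 + k by omega, ← ih (by omega)]
      exact this
  exact Prod.ext (hfst i) (funext fun k => hsnd k k.isLt i)

theorem isPerfectNecklace_of_consecutive {G : ℕ → Word a t m}
    (hper : ∀ i, G (i + t * a ^ (m + 1)) = G i)
    (hG : ∀ i, Composable wordSrc wordTgt (G i) (G (i + 1)))
    (hsurj : ∀ p, ∃ i < t * a ^ (m + 1), G i = p) :
    IsPerfectNecklace a (m + 1) t fun i => (G i).2 0 := by
  set N := t * a ^ (m + 1)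
  have hinj : Function.Injective fun i : Fin N => G i :=
    ((Fintype.bijective_iff_surjective_and_card fun i : Fin N => G i).2
      ⟨fun p => by obtain ⟨i, hi, h⟩ := hsurj p; exact ⟨⟨i, hi⟩, h⟩, by simp [N]⟩).1
  have hw := eq_windowWord_of_consecutive hG
  refine ⟨fun i => congrArg (fun p => p.2 0) (hper i), fun j w => ?_⟩
  obtain ⟨i, hi, hGi⟩ := hsurj ((G 0).1 + j, w)
  rw [hw] at hGi
  refine ⟨⟨i, hi⟩, ⟨?_, fun k => congrFun (congrArg Prod.snd hGi) k⟩, ?_⟩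
  · simpa using congrArg Fin.val (add_left_cancel (congrArg Prod.fst hGi))
  · rintro ⟨i', hi'⟩ ⟨hmod, hwin⟩
    refine hinj ?_
    dsimp only
    rw [hw, hw i, hGi]
    refine Prod.ext ?_ (funext hwin)
    show (G 0).1 + (i' : Fin t) = (G 0).1 + j
    congr 1
    exact Fin.ext (by simpa using hmod)

def rotate : Word a t m ≃ Word a t m :=
  (Equiv.addRight 1).prodCongr ((finRotate (m + 1)).symm.arrowCongr (Equiv.refl (Fin a)))

theorem wordTgt_eq_wordSrc_rotate (p : Word a t m) : wordTgt p = wordSrc (rotate p) := by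
  refine Prod.ext rfl (funext fun i => ?_)
  simp only [wordTgt, wordSrc, rotate, Fin.tail, Fin.init, Equiv.prodCongr_apply,
    Equiv.arrowCongr_apply, Equiv.symm_symm, Prod.map_snd, Function.comp_apply, Equiv.refl_apply]
  exact congrArg p.2 (finRotate_of_lt i.isLt).symm

variable [NeZero a]

theorem rotate_snd_eq_zero_iff (p : Word a t m) : (rotate p).2 = 0 ↔ p.2 = 0 := by
  simpa [rotate, funext_iff] using (finRotate (m + 1)).forall_congr_right (q := (p.2 · = 0))

/-- The edges of the contracted graph: `none` is the loop at `0` that replaces the cycle of the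
words `(j, 0)`. -/
abbrev ContractedEdge (a t m : ℕ) [NeZero a] := Option {p : Word a t m // p.2 ≠ 0}

def toWord (e : ContractedEdge a t m) : Word a t m := e.elim 0 Subtype.val

def contractedSrc (e : ContractedEdge a t m) : Vertex a t m := wordSrc (toWord e)

def contractedTgt (e : ContractedEdge a t m) : Vertex a t m := e.elim 0 fun p => wordTgt p.1

def contractedRotate : ContractedEdge a t m ≃ ContractedEdge a t m :=
  Equiv.optionCongr (rotate.subtypeEquiv fun p => (rotate_snd_eq_zero_iff p).not.symm)

theorem isBalanced_contracted :
    IsBalanced (contractedSrc : ContractedEdge a t m → Vertex a t m) contractedTgt :=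
  isBalanced_of_equiv contractedRotate fun
    | none => rfl
    | some p => wordTgt_eq_wordSrc_rotate p.1

theorem reflTransGen_windowVertex (s : ℕ → Fin a) (j : Fin t) (l : ℕ)
    (hne : ∀ k < l, (windowWord s j k : Word a t m).2 ≠ 0) :
    Relation.ReflTransGen (Adj contractedSrc contractedTgt)
      (windowVertex s j 0 : Vertex a t m) (windowVertex s j l) := by
  induction l with
  | zero => rfl
  | succ l ih =>
    refine (ih fun k hk => hne k (by omega)).tail
      ⟨some ⟨windowWord s j l, hne l (by omega)⟩, rfl, ?_⟩
    refine Prod.ext (by simp [contractedTgt, wordTgt, windowWord, windowVertex, add_assoc]) ?_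
    funext i
    simp only [contractedTgt, wordTgt, windowWord, windowVertex, Option.elim, Fin.tail,
      Fin.val_succ]
    congr 1
    omega

theorem reflTransGen_adj_contracted (ha : 1 < a) (x y : Vertex a t m) :
    Relation.ReflTransGen (Adj contractedSrc contractedTgt) x y := by
  obtain ⟨j, u⟩ := x
  obtain ⟨j', u'⟩ := y
  -- Read `u`, then `r ≥ 1` letters `1` (so that no window is zero), then `u'`;
  -- `r` is chosen so that the walk ends in the class `j'`.
  set r := (j' - j - (m : Fin t)).val + t with hr
  have hr1 : 1 ≤ r := by have := NeZero.pos t; omega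
  let s : ℕ → Fin a := fun i =>
    if h : i < m then u ⟨i, h⟩
    else if i < m + r then ⟨1, ha⟩
    else if h' : i - (m + r) < m then u' ⟨i - (m + r), h'⟩ else 0
  have hstart : (windowVertex s j 0 : Vertex a t m) = (j, u) := by
    refine Prod.ext (by simp [windowVertex]) (funext fun i => ?_)
    simp [windowVertex, s]
  have hend : (windowVertex s j (m + r) : Vertex a t m) = (j', u') := by
    refine Prod.ext ?_ (funext fun i => ?_)
    · simp only [windowVertex, hr, Nat.cast_add, Fin.cast_val_eq_self, Fin.natCast_self]
      abel
    · simp [windowVertex, s, show ¬ m + r + (i : ℕ) < m by omega]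
  rw [← hstart, ← hend]
  refine reflTransGen_windowVertex s j _ fun k hk hzero => ?_
  have h := congrFun hzero ⟨max k m - k, by omega⟩
  simp only [windowWord, Pi.zero_apply] at h
  rw [show k + (max k m - k) = max k m by omega] at h
  simp only [s, dif_neg (show ¬ max k m < m by omega), if_pos (show max k m < m + r by omega),
    Fin.ext_iff, Fin.val_zero] at h
  omega

theorem reflTransGen_contractedTgt_contractedSrc (e e' : ContractedEdge a t m) :
    Relation.ReflTransGen (Adj contractedSrc contractedTgt) (contractedTgt e) (contractedSrc e') := by
  rcases Nat.lt_or_ge 1 a with ha | ha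
  · exact reflTransGen_adj_contracted ha _ _
  · have : Subsingleton (Fin a) := Fin.subsingleton_iff_le_one.2 ha
    have hnone : ∀ e : ContractedEdge a t m, e = none
      | none => rfl
      | some ⟨_, hp⟩ => absurd (Subsingleton.elim _ _) hp
    rw [hnone e, hnone e']
    rfl

variable (a t m) in
def zeroBlock : List (Word a t m) := List.ofFn fun j => (j, 0)

theorem isChain_zeroBlock : (zeroBlock a t m).IsChain (Composable wordSrc wordTgt) :=
  List.isChain_ofFn.2 fun i hi =>
    Prod.ext (Fin.ext (by simp [wordTgt, wordSrc, Fin.val_add, Nat.mod_eq_of_lt hi])) rfl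

theorem wordTgt_getLast_zeroBlock (h : zeroBlock a t m ≠ []) :
    wordTgt ((zeroBlock a t m).getLast h) = 0 := by
  simp only [zeroBlock, List.getLast_ofFn]
  refine Prod.ext (Fin.ext ?_) rfl
  simp [wordTgt, Fin.val_add, Nat.sub_add_cancel NeZero.one_le]

theorem wordSrc_head_zeroBlock (h : zeroBlock a t m ≠ []) :
    wordSrc ((zeroBlock a t m).head h) = 0 := by
  simp only [zeroBlock, List.head_ofFn]
  exact Prod.ext (Fin.ext rfl) rfl

theorem toWord_snd_ne_zero {e : ContractedEdge a t m} (he : e ≠ none) : (toWord e).2 ≠ 0 := by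
  obtain ⟨p, rfl⟩ := Option.ne_none_iff_exists'.1 he
  exact p.2

theorem toWord_injective : Function.Injective (toWord : ContractedEdge a t m → Word a t m)
  | none, none, _ => rfl
  | none, some p, h => absurd (congrArg Prod.snd h).symm p.2
  | some p, none, h => absurd (congrArg Prod.snd h) p.2
  | some _, some _, h => congrArg some (Subtype.ext h)

theorem wordTgt_toWord {e : ContractedEdge a t m} (he : e ≠ none) :
    wordTgt (toWord e) = contractedTgt e := by
  obtain ⟨p, rfl⟩ := Option.ne_none_iff_exists'.1 he
  rfl

theorem isChain_map_toWord {l : List (ContractedEdge a t m)} (hl : none ∉ l)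
    (h : l.IsChain (Composable contractedSrc contractedTgt)) :
    (l.map toWord).IsChain (Composable wordSrc wordTgt) :=
  (List.isChain_map toWord).2 <| (List.IsChain.iff_mem.1 h).imp fun _ _ ⟨he, _, hef⟩ =>
    (wordTgt_toWord (ne_of_mem_of_not_mem he hl)).trans hef

theorem nodup_zeroBlock_append {l : List (ContractedEdge a t m)} (hl : (none :: l).Nodup) :
    (zeroBlock a t m ++ l.map toWord).Nodup := by
  refine List.nodup_append.2 ⟨List.nodup_ofFn.2 fun j j' h => congrArg Prod.fst h,
    hl.of_cons.map toWord_injective, ?_⟩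
  simp only [zeroBlock, List.mem_ofFn, List.mem_map]
  rintro _ ⟨j, rfl⟩ _ ⟨e, he, rfl⟩ h
  exact toWord_snd_ne_zero (ne_of_mem_of_not_mem he (List.nodup_cons.1 hl).1)
    (congrArg Prod.snd h).symm

theorem mem_zeroBlock_append {l : List (ContractedEdge a t m)} (hl : ∀ e, e ∈ none :: l)
    (p : Word a t m) : p ∈ zeroBlock a t m ++ l.map toWord := by
  by_cases hp : p.2 = 0
  · exact List.mem_append_left _ (List.mem_ofFn.2 ⟨p.1, Prod.ext rfl hp.symm⟩)
  · refine List.mem_append_right _ (List.mem_map.2 ⟨some ⟨p, hp⟩, ?_, rfl⟩)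
    simpa using hl (some ⟨p, hp⟩)

theorem cycle_chain_zeroBlock_append {l : List (ContractedEdge a t m)} (hl : none ∉ l)
    (h : (none :: (l ++ [none])).IsChain (Composable contractedSrc contractedTgt)) :
    Cycle.Chain (Composable wordSrc wordTgt)
      ((zeroBlock a t m ++ l.map toWord : List (Word a t m)) : Cycle (Word a t m)) := by
  have hZ : zeroBlock a t m ≠ [] := by simp [zeroBlock, NeZero.ne t]
  rw [Cycle.coe_eq_coe.2 List.isRotated_append,
    Cycle.chain_ne_nil _ (List.append_ne_nil_of_right_ne_nil _ hZ),
    List.getLast_append_of_right_ne_nil _ _ hZ, ← List.cons_append, List.isChain_append,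
    List.isChain_cons]
  rw [List.isChain_cons, List.isChain_append] at h
  obtain ⟨hhead, hchain, -, hlast⟩ := h
  refine ⟨⟨fun y hy => ?_, isChain_map_toWord hl hchain⟩, isChain_zeroBlock, fun x hx y hy => ?_⟩
  · obtain ⟨e, he, rfl⟩ : ∃ e ∈ l.head?, toWord e = y := by simpa using hy
    exact (wordTgt_getLast_zeroBlock hZ).trans
      (hhead e (by simp [List.head?_append, Option.mem_def.1 he]))
  · rw [List.head?_eq_some_head hZ, Option.mem_some_iff] at hy
    rw [Composable, ← hy, wordSrc_head_zeroBlock]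
    rcases eq_or_ne l [] with rfl | hl'
    · obtain rfl : _ = x := by simpa using hx
      exact wordTgt_getLast_zeroBlock hZ
    · rw [List.getLast?_eq_some_getLast (List.cons_ne_nil _ _), Option.mem_some_iff,
        List.getLast_cons (by simpa using hl'), List.getLast_map] at hx
      subst hx
      rw [wordTgt_toWord (ne_of_mem_of_not_mem (List.getLast_mem hl') hl)]
      exact hlast _ (List.getLast?_eq_some_getLast hl') none rfl

theorem exists_cycle_chain_zeroBlock_append :
    ∃ R : List (Word a t m), (zeroBlock a t m ++ R).Nodup ∧ (∀ p, p ∈ zeroBlock a t m ++ R) ∧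
      Cycle.Chain (Composable wordSrc wordTgt)
        ((zeroBlock a t m ++ R : List (Word a t m)) : Cycle (Word a t m)) := by
  obtain ⟨L, hnd, hall, hcyc⟩ :=
    exists_eulerian_circuit (isBalanced_contracted (a := a) (t := t) (m := m))
      reflTransGen_contractedTgt_contractedSrc
  obtain ⟨l, hrot, hchain⟩ := hcyc.exists_isRotated_cons (hall none)
  have hnd' : (none :: l).Nodup := hrot.nodup_iff.1 hnd
  exact ⟨l.map toWord, nodup_zeroBlock_append hnd',
    mem_zeroBlock_append fun e => hrot.perm.mem_iff.1 (hall e),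
    cycle_chain_zeroBlock_append (List.nodup_cons.1 hnd').1 hchain⟩

end PerfectNecklace

open PerfectNecklace in
/-- For all positive integers `a`, `n`, `t` there exists an `(a, n, t)`-perfect
necklace whose first `t` characters are all zero. -/
theorem exists_perfectNecklace_starting_with_zeros (a n t : ℕ)
    (ha : 0 < a) (hn : 0 < n) (ht : 0 < t) :
    ∃ v : ℕ → Fin a, IsPerfectNecklace a n t v ∧ ∀ i < t, v i = ⟨0, ha⟩ := by
  obtain ⟨m, rfl⟩ := Nat.exists_eq_add_one_of_ne_zero hn.ne'
  have : NeZero a := ⟨ha.ne'⟩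
  have : NeZero t := ⟨ht.ne'⟩
  obtain ⟨R, hnd, hall, hcyc⟩ := exists_cycle_chain_zeroBlock_append (a := a) (t := t) (m := m)
  set W := zeroBlock a t m ++ R
  have hlen : W.length = t * a ^ (m + 1) := by
    rw [← List.toFinset_card_of_nodup hnd,
      Finset.eq_univ_of_forall fun p => List.mem_toFinset.2 (hall p), Finset.card_univ]
    simp
  have hpos : 0 < W.length := hlen ▸ Nat.pos_of_ne_zero (by simp [NeZero.ne])
  let G i := W[i % W.length]'(Nat.mod_lt _ hpos)
  refine ⟨fun i => (G i).2 0, isPerfectNecklace_of_consecutive (G := G) (fun i => ?_)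
    (hcyc.rel_getElem_mod_s6 hpos) fun p => ?_, fun i hi => ?_⟩
  · simp [G, ← hlen]
  · obtain ⟨i, hi, rfl⟩ := List.mem_iff_getElem.1 (hall p)
    exact ⟨i, hlen ▸ hi, by simp [G, Nat.mod_eq_of_lt hi]⟩
  · simp [G, W, zeroBlock, Nat.mod_eq_of_lt (show i < t + R.length by omega), hi,
      List.getElem_append_left]
end

section
/- Let u be an upcycle for {0,...,a−1}^n with diamondicity d, let k ≥ 1, and let v be a cyclic partial word over {0,...,k−1} with the same length and frame as u^(k^{n−d}) (the concatenation of k^{n−d} copies of u read cyclically). Then a·v + u^(k^{n−d}) (componentwise, with ◊+◊ := ◊) is an upcycle for {0,...,ak−1}^n if and only if the total word v∖◊ obtained by deleting the diamonds of v is a (k, n−d, (n−d)a^{n−d}/n)-perfect necklace. -/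
/-!
Write a letter of `{0,…,ak-1}` as `a·x + y` with `x < k`, `y < a`. The window of `a·v + u` at `i`
covers `a·X + y` iff `u` covers `y` there and `v` covers `X` there. As `u` is an upcycle of length
`N = a^(n-d)`, `y` fixes `i` modulo `N`; so the product is an upcycle iff for every `i₀ < N` each
`X` is covered by exactly one of the windows of `v` at `i₀ + rN`, `r < k^(n-d)`. These windows
carry their `n-d` letters at the same offsets, and in `v∖◊` they become the length-`(n-d)` windows
at `c + rt`, where `c` is the number of letters of `v` before `i₀` and `t` the number in one period
`N`. As `i₀` runs through a period, `c` runs through all residues mod `t`: this is the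
perfect-necklace condition. Counting the letters in `nN` positions in two ways gives
`nt = (n-d)N`.
-/

open Function Nat

theorem existsUnique_fin_mul_iff {N K : ℕ} (j : Fin N) (Q : ℕ → Prop) :
    (∃! i : Fin (N * K), (i : ℕ) % N = j ∧ Q i) ↔ ∃! r : Fin K, Q (j + r * N) := by
  have hlt (r : Fin K) : (j : ℕ) + r * N < N * K := by nlinarith [j.isLt, r.isLt]
  have hmod (r : ℕ) : ((j : ℕ) + r * N) % N = j := by simp [Nat.mod_eq_of_lt j.isLt]
  have hdiv (r : ℕ) : ((j : ℕ) + r * N) / N = r := by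
    rw [Nat.add_mul_div_right _ _ j.pos, Nat.div_eq_of_lt j.isLt, zero_add]
  have hdecomp {i : ℕ} (hi : i % N = j) : i = j + i / N * N := by
    rw [← hi, Nat.mod_add_div']
  constructor
  · rintro ⟨i, ⟨hi, hQ⟩, huniq⟩
    refine ⟨⟨i / N, Nat.div_lt_of_lt_mul i.isLt⟩, by beta_reduce; rwa [← hdecomp hi],
      fun r hr => ?_⟩
    have := huniq ⟨j + r * N, hlt r⟩ ⟨hmod r, hr⟩
    ext
    simp [← this, hdiv]
  · rintro ⟨r, hr, huniq⟩
    refine ⟨⟨j + r * N, hlt r⟩, ⟨hmod r, hr⟩, fun i ⟨hi, hQ⟩ => ?_⟩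
    have := huniq ⟨i / N, Nat.div_lt_of_lt_mul i.isLt⟩ (by beta_reduce; rwa [← hdecomp hi])
    ext
    rw [hdecomp hi, ← this]

theorem existsUnique_fin_add_iff {K : ℕ} [NeZero K] {B : ℕ → Prop} (hB : Periodic B K) (s : ℕ) :
    (∃! r : Fin K, B (r + s)) ↔ ∃! r : Fin K, B r := by
  refine Equiv.existsUnique_congr (Equiv.addRight (Fin.ofNat K s)) fun r => ?_
  rw [Equiv.coe_addRight, Fin.val_add, Fin.val_ofNat, Nat.add_mod_mod, hB.map_mod_nat]

namespace Nat

variable {p : ℕ → Prop} [DecidablePred p]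

section Periodic

variable {N : ℕ} (hp : Periodic p N)
include hp

theorem count_add_of_periodic (i : ℕ) : count p (i + N) = count p i + count p N := by
  induction i with
  | zero => simp
  | succ i ih =>
    rw [add_right_comm, count_succ, ih, count_succ]
    simp only [hp i]
    ring

theorem count_add_mul_of_periodic (i r : ℕ) : count p (i + r * N) = count p i + r * count p N := by
  induction r with
  | zero => simp
  | succ r ih => rw [add_one_mul, ← add_assoc, count_add_of_periodic hp, ih, add_one_mul, add_assoc]

theorem nth_add_mul_of_periodic (hinf : (Set.ofPred p).Infinite) (m r : ℕ) :
    nth p (m + r * count p N) = nth p m + r * N := by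
  have hmem : p (nth p m + r * N) := by
    rw [show p (nth p m + r * N) = p (nth p m) from hp.nat_mul r _]
    exact nth_mem_of_infinite hinf m
  rw [← nth_count hmem, count_add_mul_of_periodic hp, count_nth_of_infinite hinf]

end Periodic

section Window

variable {n L : ℕ} (hwin : ∀ i, count (fun j => p (i + j)) n = L)
include hwin

theorem count_add_of_window (i : ℕ) : count p (i + n) = count p i + L := by
  rw [count_add, hwin]

theorem count_mul_of_window (r : ℕ) : count p (r * n) = r * L := by
  induction r with
  | zero => simp
  | succ r ih => rw [add_one_mul, count_add_of_window hwin, ih, add_one_mul]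

theorem infinite_setOf_of_window (hL : 0 < L) : (Set.ofPred p).Infinite := by
  refine Set.infinite_of_forall_exists_gt fun m => ?_
  obtain ⟨j, -, hj⟩ := count_ne_iff_exists.1 ((hwin (m + 1)).trans_ne hL.ne')
  exact ⟨m + 1 + j, hj, by omega⟩

theorem exists_enum_window (hinf : (Set.ofPred p).Infinite) (i : ℕ) :
    ∃ σ : Fin L → Fin n, Injective σ ∧ (∀ l, i + σ l = nth p (count p i + l)) ∧
      ∀ j : Fin n, p (i + j) ↔ j ∈ Set.range σ := by
  have hbounds (l : Fin L) : i ≤ nth p (count p i + l) ∧ nth p (count p i + l) < i + n := by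
    refine ⟨(le_nth_count hinf i).trans ((nth_le_nth hinf).2 (by omega)), ?_⟩
    rw [← lt_nth_iff_count_lt hinf, count_add_of_window hwin]
    omega
  refine ⟨fun l => ⟨nth p (count p i + l) - i, by grind⟩, fun l₁ l₂ h => ?_, fun l => ?_,
    fun j => ⟨fun hj => ?_, ?_⟩⟩
  · have := nth_injective hinf (by grind : nth p (count p i + l₁) = nth p (count p i + l₂))
    grind
  · grind
  · have hlt : count p (i + j) < count p (i + n) := count_strict_mono hj (by omega)
    have hle : count p i ≤ count p (i + j) := count_monotone p (by omega)
    rw [count_add_of_window hwin] at hlt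
    refine ⟨⟨count p (i + j) - count p i, by omega⟩, Fin.ext ?_⟩
    simp only [Nat.add_sub_cancel' hle, nth_count hj]
    omega
  · rintro ⟨l, rfl⟩
    have := hbounds l
    simp only [Nat.add_sub_cancel' this.1]
    exact nth_mem_of_infinite hinf _

end Window

theorem forall_fin_count_iff {N : ℕ} {Q : ℕ → Prop}
    (hQ : Periodic Q (count p N)) (hinf : (Set.ofPred p).Infinite) (ht : 0 < count p N) :
    (∀ i : Fin N, Q (count p i)) ↔ ∀ c : Fin (count p N), Q c := by
  refine ⟨fun h c => ?_, fun h i => ?_⟩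
  · simpa [count_nth_of_infinite hinf] using h ⟨nth p c, nth_lt_of_lt_count c.isLt⟩
  · simpa [hQ.map_mod_nat] using h ⟨count p i % count p N, Nat.mod_lt _ ht⟩

theorem count_mul_eq_of_periodic_of_window {N n L : ℕ}
    (hp : Periodic p N) (hwin : ∀ i, count (fun j => p (i + j)) n = L) :
    count p N * n = L * N := by
  have h := count_add_mul_of_periodic hp 0 n
  rw [zero_add, mul_comm, count_mul_of_window hwin, count_zero, zero_add] at h
  linarith

end Nat

section Words

variable {a k n : ℕ}

def digitEquiv : Fin k × Fin a ≃ Fin (a * k) :=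
  finProdFinEquiv.trans (finCongr (mul_comm k a))

theorem digitEquiv_apply_val (x : Fin k) (y : Fin a) : (digitEquiv (x, y) : ℕ) = a * x + y := by
  simp [digitEquiv, finProdFinEquiv, add_comm]

def combine (u : ℕ → Option (Fin a)) (v : ℕ → Option (Fin k)) (i : ℕ) : Option (Fin (a * k)) :=
  Option.map₂ (fun x y => digitEquiv (x, y)) (v i) (u i)

variable {u : ℕ → Option (Fin a)} {v : ℕ → Option (Fin k)}

theorem combine_eq_some {i : ℕ} {x : Fin k} {y : Fin a} (hv : v i = some x) (hu : u i = some y) :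
    combine u v i = some (digitEquiv (x, y)) := by
  simp [combine, hv, hu]

theorem combine_eq_none_iff (hframe : ∀ i, v i = none ↔ u i = none) (i : ℕ) :
    combine u v i = none ↔ u i = none := by
  have := hframe i
  cases hv : v i <;> cases hu : u i <;> simp_all [combine]

theorem covers_combine_iff (hframe : ∀ i, v i = none ↔ u i = none) (i : ℕ)
    (X : Fin n → Fin k) (y : Fin n → Fin a) :
    Covers (a * k) n (combine u v) i (fun j => digitEquiv (X j, y j)) ↔
      Covers a n u i y ∧ Covers k n v i X := by
  simp only [Covers, ← forall_and]
  refine forall_congr' fun j => ?_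
  cases hu : u (i + j) with
  | none => simp [(combine_eq_none_iff hframe _).2 hu, (hframe _).2 hu]
  | some y' =>
    obtain ⟨x', hv⟩ := Option.ne_none_iff_exists'.1 (mt (hframe (i + j)).1 (by simp [hu]))
    simp [combine_eq_some hv hu, hv, digitEquiv.injective.eq_iff, and_comm]

theorem covers_getD (i : ℕ) (y₀ : Fin a) : Covers a n u i (fun j => (u (i + j)).getD y₀) := by
  intro j
  cases h : u (i + j) <;> simp [h]

theorem IsUpcycle.covers_iff_mod_eq {N : ℕ} (hu : IsUpcycle a n N u) {y : Fin n → Fin a}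
    {i₀ : Fin N} (h₀ : Covers a n u i₀ y) (i : ℕ) : Covers a n u i y ↔ i % N = i₀ := by
  have hmod : Covers a n u i y ↔ Covers a n u (i % N) y := by
    refine forall_congr' fun j => ?_
    have hper : Periodic u N := hu.1
    rw [← hper.map_mod_nat (i % N + j), Nat.mod_add_mod, hper.map_mod_nat]
  rw [hmod]
  refine ⟨fun h => congrArg Fin.val ((hu.2 y).unique (y₁ := ⟨i % N, Nat.mod_lt _ i₀.pos⟩) h h₀),
    fun h => h ▸ h₀⟩

theorem forall_existsUnique_covers_combine_iff {N K : ℕ} (ha : 0 < a) (hu : IsUpcycle a n N u)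
    (hframe : ∀ i, v i = none ↔ u i = none) :
    (∀ w : Fin n → Fin (a * k), ∃! i : Fin (N * K), Covers (a * k) n (combine u v) i w) ↔
      ∀ i₀ : Fin N, ∀ X : Fin n → Fin k, ∃! r : Fin K, Covers k n v (i₀ + r * N) X := by
  have key (X : Fin n → Fin k) (y : Fin n → Fin a) (i₀ : Fin N) (h₀ : Covers a n u i₀ y) :
      (∃! i : Fin (N * K), Covers (a * k) n (combine u v) i fun j => digitEquiv (X j, y j)) ↔
        ∃! r : Fin K, Covers k n v (i₀ + r * N) X := by
    simp only [covers_combine_iff hframe, hu.covers_iff_mod_eq h₀]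
    exact existsUnique_fin_mul_iff i₀ fun i => Covers k n v i X
  have hsurj : Surjective fun Xy : (Fin n → Fin k) × (Fin n → Fin a) =>
      fun j => digitEquiv (Xy.1 j, Xy.2 j) :=
    fun w => ⟨(fun j => (digitEquiv.symm (w j)).1, fun j => (digitEquiv.symm (w j)).2), by simp⟩
  rw [hsurj.forall, Prod.forall]
  constructor
  · intro h i₀ X
    exact (key X _ i₀ (covers_getD _ ⟨0, ha⟩)).1 (h X _)
  · intro h X y
    obtain ⟨i₀, h₀, -⟩ := hu.2 y
    exact (key X y i₀ h₀).2 (h i₀ X)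

theorem periodic_ne_none_of_frame {N : ℕ} (hu : Periodic u N)
    (hframe : ∀ i, v i = none ↔ u i = none) : Periodic (fun i => v i ≠ none) N := fun i => by
  simp only [ne_eq, hframe, hu i]

theorem combine_periodic {N K : ℕ} (hu : Periodic u N) (hv : Periodic v (N * K)) :
    Periodic (combine u v) (N * K) := fun i => by
  have hu' : u (i + N * K) = u i := by rw [mul_comm]; exact hu.nat_mul K i
  simp only [combine, hv i, hu']

theorem count_window_ne_none {d : ℕ}
    (hdiam : ∀ i, ((Finset.range n).filter (fun j => u (i + j) = none)).card = d)
    (hframe : ∀ i, v i = none ↔ u i = none) (i : ℕ) :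
    count (fun j => v (i + j) ≠ none) n = n - d := by
  have := Finset.card_filter_add_card_filter_not (s := Finset.range n) fun j => v (i + j) ≠ none
  simp only [not_not, hframe, hdiam, Finset.card_range] at this
  rw [count_eq_card_filter_range]
  omega

theorem isUpcycle_one_of_forall_eq_none (h : ∀ i, u i = none) : IsUpcycle a n 1 u :=
  ⟨fun i => by rw [h, h], fun _ => ⟨0, fun j => Or.inl (h _), fun _ _ => Subsingleton.elim _ _⟩⟩

end Words

noncomputable def totalWord {k : ℕ} (v : ℕ → Option (Fin k)) (z : Fin k) (m : ℕ) : Fin k :=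
  (v (nth (fun i => v i ≠ none) m)).getD z

def IsPerfectAt (k L t : ℕ) (V : ℕ → Fin k) (c : ℕ) : Prop :=
  ∀ x : Fin L → Fin k, ∃! r : Fin (k ^ L), ∀ l : Fin L, V (c + r * t + l) = x l

theorem isPerfectNecklace_iff {k L t : ℕ} {V : ℕ → Fin k} :
    IsPerfectNecklace k L t V ↔ Periodic V (t * k ^ L) ∧ ∀ j : Fin t, IsPerfectAt k L t V j :=
  and_congr_right fun _ => forall_congr' fun j => forall_congr' fun x =>
    existsUnique_fin_mul_iff j fun i => ∀ l : Fin L, V (i + l) = x l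

theorem isPerfectNecklace_zero {k L : ℕ} (V : ℕ → Fin k) : IsPerfectNecklace k L 0 V :=
  ⟨by simp, fun j => j.elim0⟩

theorem isPerfectAt_periodic {k L t : ℕ} [NeZero k] {V : ℕ → Fin k}
    (hV : Periodic V (t * k ^ L)) : Periodic (IsPerfectAt k L t V) t := fun c => by
  refine propext (forall_congr' fun x => ?_)
  have hB : Periodic (fun r => ∀ l : Fin L, V (c + r * t + l) = x l) (k ^ L) := fun r => by
    have hshift (l : ℕ) : c + (r + k ^ L) * t + l = c + r * t + l + t * k ^ L := by ring
    simp only [hshift, hV _]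
  have hshift (r l : ℕ) : c + t + r * t + l = c + (r + 1) * t + l := by ring
  simp only [hshift]
  exact existsUnique_fin_add_iff hB 1

section TotalWord

variable {k n L N : ℕ} {v : ℕ → Option (Fin k)} (z : Fin k)

theorem totalWord_eq_iff (hinf : (Set.ofPred fun i => v i ≠ none).Infinite) (m : ℕ) (b : Fin k) :
    totalWord v z m = b ↔ v (nth (fun i => v i ≠ none) m) = some b := by
  simp [totalWord, Option.getD_eq_iff, nth_mem_of_infinite hinf m]

theorem forall_existsUnique_covers_iff_isPerfectAt (hp : Periodic (fun i => v i ≠ none) N)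
    (hinf : (Set.ofPred fun i => v i ≠ none).Infinite)
    (hwin : ∀ i, count (fun j => v (i + j) ≠ none) n = L) (i₀ : ℕ) :
    (∀ X : Fin n → Fin k, ∃! r : Fin (k ^ L), Covers k n v (i₀ + r * N) X) ↔
      IsPerfectAt k L (count (fun i => v i ≠ none) N) (totalWord v z)
        (count (fun i => v i ≠ none) i₀) := by
  set p : ℕ → Prop := fun i => v i ≠ none
  obtain ⟨σ, hσ, hσnth, hσrange⟩ := exists_enum_window hwin hinf i₀
  have hcovers (r : ℕ) (X : Fin n → Fin k) : Covers k n v (i₀ + r * N) X ↔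
      ∀ l : Fin L, totalWord v z (count p i₀ + r * count p N + l) = X (σ l) := by
    have hshift (j : ℕ) : (v (i₀ + j + r * N) ≠ none) = p (i₀ + j) := hp.nat_mul r (i₀ + j)
    calc Covers k n v (i₀ + r * N) X
        ↔ ∀ j : Fin n, p (i₀ + j) → v (i₀ + j + r * N) = some (X j) := by
          simp only [Covers, add_right_comm i₀, or_iff_not_imp_left, hshift]
      _ ↔ ∀ l : Fin L, v (i₀ + σ l + r * N) = some (X (σ l)) := by
          simp only [hσrange, Set.forall_mem_range]
      _ ↔ _ := by
          simp only [hσnth, ← nth_add_mul_of_periodic hp hinf, totalWord_eq_iff z hinf,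
            add_right_comm _ (r * count p N)]
          rfl
  have : Nonempty (Fin k) := ⟨z⟩
  simp only [hcovers]
  exact (hσ.surjective_comp_right.forall (p := fun x => ∃! r : Fin (k ^ L), ∀ l : Fin L,
    totalWord v z (count p i₀ + r * count p N + l) = x l)).symm

theorem totalWord_periodic {K : ℕ}
    (hp : Periodic (fun i => v i ≠ none) N) (hinf : (Set.ofPred fun i => v i ≠ none).Infinite)
    (hv : Periodic v (N * K)) : Periodic (totalWord v z) (count (fun i => v i ≠ none) N * K) :=
  fun m => by
    rw [totalWord, mul_comm, nth_add_mul_of_periodic hp hinf, mul_comm K, hv, totalWord]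

end TotalWord

theorem isUpcycle_combine_iff_isPerfectNecklace {a k n N L : ℕ} [NeZero k]
    {u : ℕ → Option (Fin a)} {v : ℕ → Option (Fin k)} (ha : 0 < a) (hu : IsUpcycle a n N u)
    (hframe : ∀ i, v i = none ↔ u i = none) (hv : Periodic v (N * k ^ L))
    (hwin : ∀ i, count (fun j => v (i + j) ≠ none) n = L) (hL : 0 < L) (z : Fin k) :
    IsUpcycle (a * k) n (N * k ^ L) (combine u v) ↔
      IsPerfectNecklace k L (count (fun i => v i ≠ none) N) (totalWord v z) := by
  have hp := periodic_ne_none_of_frame hu.1 hframe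
  have hinf := infinite_setOf_of_window (p := fun i => v i ≠ none) hwin hL
  have hN : 0 < N := (hu.2 fun _ => ⟨0, ha⟩).exists.choose.pos
  have ht : 0 < count (fun i => v i ≠ none) N := by
    have := count_mul_eq_of_periodic_of_window hp hwin
    exact Nat.pos_of_ne_zero fun h => by simp [h, hL.ne', hN.ne'] at this
  rw [isPerfectNecklace_iff, IsUpcycle]
  refine and_congr (iff_of_true (combine_periodic hu.1 hv) (totalWord_periodic z hp hinf hv)) ?_
  rw [forall_existsUnique_covers_combine_iff ha hu hframe]
  simp only [forall_existsUnique_covers_iff_isPerfectAt z hp hinf hwin]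
  exact forall_fin_count_iff (isPerfectAt_periodic (totalWord_periodic z hp hinf hv)) hinf ht

/-- Alphabet multiplier: let `u` be an upcycle for `{0,…,a-1}^n` with diamondicity `d`
(so of length `a ^ (n-d)`), and let `v` be a cyclic partial word over `{0,…,k-1}` with
the same length and frame as `u^(k^(n-d))` (as periodic functions, the same frame as
`u` and period `(a*k)^(n-d)`).  Then `a·v + u^(k^(n-d))` (componentwise, diamonds
staying diamonds) is an upcycle for `{0,…,ak-1}^n` if and only if the total word `v∖◊`
obtained by deleting the diamonds of `v` (enumerated via `Nat.nth`) is a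
`(k, n-d, (n-d)·a^(n-d)/n)`-perfect necklace. -/
theorem alphabet_multiplier (a n d k : ℕ) (ha : 2 ≤ a) (hk : 1 ≤ k) (hn : 0 < n)
    (u : ℕ → Option (Fin a))
    (hu : IsUpcycle a n (a ^ (n - d)) u)
    (hdiam : ∀ i, ((Finset.range n).filter (fun j => u (i + j) = none)).card = d)
    (v : ℕ → Option (Fin k))
    (hvper : ∀ i, v (i + (a * k) ^ (n - d)) = v i)
    (hframe : ∀ i, v i = none ↔ u i = none) :
    IsUpcycle (a * k) n ((a * k) ^ (n - d))
      (fun i =>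
        match v i, u i with
        | some x, some y => some ⟨a * x.val + y.val, by
            have hx := x.isLt
            have hy := y.isLt
            nlinarith⟩
        | _, _ => none) ↔
    IsPerfectNecklace k (n - d) ((n - d) * a ^ (n - d) / n)
      (fun m => (v (Nat.nth (fun i => v i ≠ none) m)).getD ⟨0, hk⟩) := by
  have : NeZero k := ⟨by omega⟩
  have hwin := count_window_ne_none hdiam hframe
  rcases Nat.eq_zero_or_pos (n - d) with hL | hL
  · have hv (i : ℕ) : v i = none := by
      simpa using count_iff_forall_not.1 ((hwin i).trans hL) 0 hn
    rw [hL, zero_mul, Nat.zero_div, pow_zero]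
    exact iff_of_true (isUpcycle_one_of_forall_eq_none fun i => by simp only [hv i])
      (isPerfectNecklace_zero _)
  · have ht : (n - d) * a ^ (n - d) / n = count (fun i => v i ≠ none) (a ^ (n - d)) :=
      Nat.div_eq_of_eq_mul_left hn
        (count_mul_eq_of_periodic_of_window (periodic_ne_none_of_frame hu.1 hframe) hwin).symm
    rw [ht, mul_pow]
    convert isUpcycle_combine_iff_isPerfectNecklace (by omega) hu hframe
      (by rwa [← mul_pow]) hwin hL ⟨0, hk⟩ using 2
    · ext1 i
      cases hv : v i <;> cases hu : u i <;>
        simp [combine, hv, hu, Fin.ext_iff, digitEquiv_apply_val]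
    · rfl
end

section
/- If there exists an upcycle for {0,...,a−1}^n with diamondicity d, then for every integer k ≥ 1, there exists an upcycle for {0,...,ak−1}^n with diamondicity d. -/
/-!
Refine every letter `x` at position `i` of the upcycle `u` (period `L = a^m`, `m = n - d`,
`M` letters per period) into the pair `(x, B c)`, where `c` is the number of letters of `u`
before `i` and `B` is a sequence over `{0,…,k-1}` of period `M k^m` whose length-`m` windows
starting at `s, s + M, …, s + (k^m - 1) M` run through every word exactly once, for every `s`.
A window of the refined word starting at `r + qL` then covers `(x_j, y_j)_j` iff the window
of `u` at `r` covers `(x_j)` and the window of `B` at `c_r + qM` reads the `y_j` at the letter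
positions; both conditions have unique solutions `r < L`, `q < k^m`.

Such a `B` is read off an Eulerian circuit of the product of the `M`-cycle with the de Bruijn
graph whose edges are the words of length `m`. The circuit is a successor permutation of the
edges with a single cycle, obtained from any successor permutation by merging cycles with
transpositions.
-/

open Function

namespace Equiv.Perm

variable {α : Type*} {π π' : Perm α}

theorem sameCycle_apply_of_eq_off [Finite α] {w : α}
    (h : ∀ y, π.SameCycle w y → y ≠ w → π' y = π y) {y : α} (hy : π.SameCycle w y) :
    π'.SameCycle (π w) y := by
  suffices ∀ j : ℕ, π'.SameCycle (π w) ((π ^ j) (π w)) by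
    obtain ⟨j, rfl⟩ := (sameCycle_apply_left.mpr hy).exists_nat_pow_eq
    exact this j
  intro j
  induction j with
  | zero => exact SameCycle.refl _ _
  | succ j ih =>
    rw [pow_succ', Perm.mul_apply]
    by_cases hw : (π ^ j) (π w) = w
    · rw [hw]
    · rw [← h _ (sameCycle_pow_right.mpr (sameCycle_apply_right.mpr (SameCycle.refl _ _))) hw]
      exact sameCycle_apply_right.mpr ih

theorem pow_apply_eq_pow_apply_iff_modEq [Fintype α] {e₀ : α} (h : ∀ e, π.SameCycle e₀ e)
    {x y : ℕ} : (π ^ x) e₀ = (π ^ y) e₀ ↔ x ≡ y [MOD Fintype.card α] := by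
  have hpos : 0 < minimalPeriod π e₀ :=
    minimalPeriod_pos_of_mem_periodicPts ⟨orderOf π, orderOf_pos π, by
      rw [IsPeriodicPt, IsFixedPt, ← coe_pow, pow_orderOf_eq_one, coe_one, id]⟩
  have hcard : minimalPeriod π e₀ = Fintype.card α := by
    rw [← Fintype.card_fin (minimalPeriod π e₀)]
    refine Fintype.card_of_bijective (f := fun i => π^[i] e₀) ⟨fun i j hij => ?_, fun e => ?_⟩
    · exact Fin.ext (iterate_injOn_Iio_minimalPeriod i.isLt j.isLt hij)
    · obtain ⟨n, rfl⟩ := (h e).exists_nat_pow_eq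
      exact ⟨⟨n % _, Nat.mod_lt _ hpos⟩, by rw [coe_pow]; exact iterate_mod_minimalPeriod_eq⟩
  rw [coe_pow, coe_pow, ← iterate_mod_minimalPeriod_eq, ← iterate_mod_minimalPeriod_eq (n := y),
    hcard]
  refine ⟨fun hxy => ?_, fun hxy => by rw [hxy]⟩
  rw [← hcard] at hxy ⊢
  exact iterate_injOn_Iio_minimalPeriod (Nat.mod_lt _ hpos) (Nat.mod_lt _ hpos) hxy

variable [DecidableEq α] [Finite α]

theorem sameCycle_mul_swap {x b : α} (hxb : ¬π.SameCycle x b) :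
    (π * swap x b).SameCycle x b ∧ ∀ y, π.SameCycle x y → (π * swap x b).SameCycle x y := by
  have hne : ∀ y, π.SameCycle x y → y ≠ b := fun y hy hyb => hxb (hyb ▸ hy)
  have eq_off : ∀ y, y ≠ x → y ≠ b → (π * swap x b) y = π y := fun y hx hb => by
    rw [Perm.mul_apply, swap_apply_of_ne_of_ne hx hb]
  have hx : (π * swap x b) x = π b := by rw [Perm.mul_apply, swap_apply_left]
  have hb : (π * swap x b) b = π x := by rw [Perm.mul_apply, swap_apply_right]
  have hxb' : (π * swap x b).SameCycle x b := by
    have := sameCycle_apply_of_eq_off (w := b) (π' := π * swap x b)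
      (fun y hy hyb => eq_off y (fun hyx => hxb (hyx ▸ hy).symm) hyb) (SameCycle.refl _ _)
    rwa [← hx, sameCycle_apply_left] at this
  refine ⟨hxb', fun y hy => hxb'.trans ?_⟩
  have := sameCycle_apply_of_eq_off (w := x) (π' := π * swap x b)
    (fun y hy hyx => eq_off y hyx (hne y hy)) hy
  rwa [← hb, sameCycle_apply_left] at this

end Equiv.Perm

open Equiv Equiv.Perm in
theorem exists_perm_forall_sameCycle {E V : Type*} [Fintype E] [DecidableEq E]
    {src tgt : E → V} {π₀ : Perm E} (hπ₀ : ∀ e, src (π₀ e) = tgt e) {e₀ : E}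
    (hconn : ∀ e, Relation.ReflTransGen (fun x y => tgt x = src y) e₀ e) :
    ∃ π : Perm E, (∀ e, src (π e) = tgt e) ∧ ∀ e, π.SameCycle e₀ e := by
  let cycle (π : Perm E) : Finset E := {e | π.SameCycle e₀ e}
  have : Nonempty {π : Perm E // ∀ e, src (π e) = tgt e} := ⟨⟨π₀, hπ₀⟩⟩
  obtain ⟨⟨π, hπ⟩, hmax⟩ :=
    Finite.exists_max fun π : {π : Perm E // ∀ e, src (π e) = tgt e} => (cycle π).card
  refine ⟨π, hπ, fun f => by_contra fun hf => ?_⟩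
  obtain ⟨x, y, hxy, hx, hy⟩ : ∃ x y, tgt x = src y ∧ π.SameCycle e₀ x ∧ ¬π.SameCycle e₀ y := by
    by_contra! hclosed
    have hreach : ∀ e, Relation.ReflTransGen (fun x y => tgt x = src y) e₀ e →
        π.SameCycle e₀ e := by
      intro e he
      induction he with
      | refl => exact SameCycle.refl _ _
      | tail _ hr ih => exact hclosed _ _ hr ih
    exact hf (hreach f (hconn f))
  -- `x` and `b = π⁻¹ y` share their target, so swapping them keeps `π` compatible and merges
  -- their cycles, contradicting maximality.
  set b := π.symm y
  have hxb : ¬π.SameCycle x b := fun h => hy (hx.trans (h.trans ⟨1, by simp [b]⟩))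
  have htgt : tgt b = tgt x := by rw [← hπ b, apply_symm_apply, hxy]
  have hπ' : ∀ e, src ((π * swap x b) e) = tgt e := by
    intro e
    rw [Perm.mul_apply, hπ, swap_apply_def]
    split_ifs with h₁ h₂
    · rw [h₁, htgt]
    · rw [h₂, htgt]
    · rfl
  obtain ⟨hb', hmerge⟩ := sameCycle_mul_swap hxb
  have hsub : cycle π ⊂ cycle (π * swap x b) := by
    refine Finset.ssubset_iff_of_subset (fun e he => ?_) |>.mpr ⟨b, ?_, ?_⟩
    · simp only [cycle, Finset.mem_filter, Finset.mem_univ, true_and] at he ⊢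
      exact (hmerge e₀ hx.symm).symm.trans (hmerge e (hx.symm.trans he))
    · simpa [cycle] using (hmerge e₀ hx.symm).symm.trans hb'
    · simpa [cycle] using fun h => hxb (hx.symm.trans h)
  exact (Finset.card_lt_card hsub).not_ge (hmax ⟨_, hπ'⟩)

open Equiv

namespace PhasedDeBruijn

variable {M m k : ℕ}

/-- Edges of the product of the `M`-cycle with the de Bruijn graph on words of length `m`: the
edge `(φ, w)` runs from `(φ, init w)` to `(φ + 1, tail w)`. -/
abbrev Edge (M m k : ℕ) : Type := ZMod M × (Fin (m + 1) → Fin k)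

def src (e : Edge M m k) : ZMod M × (Fin m → Fin k) := (e.1, Fin.init e.2)

def tgt (e : Edge M m k) : ZMod M × (Fin m → Fin k) := (e.1 + 1, Fin.tail e.2)

def rotate : Perm (Edge M m k) :=
  (Equiv.addRight 1).prodCongr ((finRotate (m + 1)).symm.arrowCongr (Equiv.refl _))

theorem src_rotate (e : Edge M m k) : src (rotate e) = tgt e := by
  ext i
  · rfl
  · simp [rotate, src, tgt, Fin.init, Fin.tail]

theorem reflTransGen_of_shift (i : ℕ) (e : Edge M m k) (w : Fin (m + 1) → Fin k)
    (hw : ∀ (j : ℕ) (hj : j + i < m + 1), w ⟨j, by omega⟩ = e.2 ⟨j + i, hj⟩) :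
    Relation.ReflTransGen (fun x y => tgt x = src y) e (e.1 + i, w) := by
  induction i generalizing e with
  | zero =>
    have : w = e.2 := funext fun j => hw j j.isLt
    simpa [this] using Relation.ReflTransGen.refl
  | succ i ih =>
    let e' : Edge M m k := (e.1 + 1, Fin.snoc (Fin.tail e.2) (w ⟨m - i, by omega⟩))
    have hstep : tgt e = src e' := by simp [tgt, src, e', Fin.init_snoc]
    have hreach := ih e' fun j hj => by
      rcases Nat.lt_or_ge (j + i) m with h | h
      · simp only [e']
        rw [show (⟨j + i, hj⟩ : Fin (m + 1)) = Fin.castSucc ⟨j + i, h⟩ from rfl, Fin.snoc_castSucc]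
        exact hw j (by omega)
      · simp only [e']
        rw [show (⟨j + i, hj⟩ : Fin (m + 1)) = Fin.last m from Fin.ext (by simp; omega),
          Fin.snoc_last]
        exact congrArg w (Fin.ext (by simp; omega))
    have hphase : e'.1 + i = e.1 + ((i + 1 : ℕ) : ZMod M) := by push_cast; ring
    exact hphase ▸ Relation.ReflTransGen.head (r := fun x y => tgt x = src y) hstep hreach

theorem reflTransGen [NeZero M] (e f : Edge M m k) :
    Relation.ReflTransGen (fun x y => tgt x = src y) e f := by
  have h := reflTransGen_of_shift ((f.1 - e.1).val + M * (m + 1)) e f.2 fun j hj =>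
    absurd hj (by have := NeZero.pos M; nlinarith)
  simpa using h

theorem exists_of_forall_sameCycle [NeZero M] {π : Perm (Edge M m k)}
    (hπ : ∀ e, src (π e) = tgt e) {e₀ : Edge M m k} (hcyc : ∀ e, π.SameCycle e₀ e) :
    ∃ B : ℕ → Fin k, Periodic B (M * k ^ (m + 1)) ∧
      ∀ (s : ℕ) (W : Fin (m + 1) → Fin k),
        ∃! q : Fin (k ^ (m + 1)), ∀ t : Fin (m + 1), B (s + q * M + t) = W t := by
  set f : ℕ → Edge M m k := fun t => (π ^ t) e₀
  have hf : ∀ x y, f x = f y ↔ x ≡ y [MOD M * k ^ (m + 1)] := fun x y => by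
    simpa [ZMod.card] using Perm.pow_apply_eq_pow_apply_iff_modEq hcyc (x := x) (y := y)
  have hfst₁ : ∀ e, (π e).1 = e.1 + 1 := fun e => congrArg Prod.fst (hπ e)
  have hsnd₁ : ∀ e (i : Fin m), (π e).2 i.castSucc = e.2 i.succ := fun e =>
    congrFun (congrArg Prod.snd (hπ e))
  have hsucc : ∀ t, f (t + 1) = π (f t) := fun t => by simp only [f, pow_succ', Perm.mul_apply]
  have hfst : ∀ t, (f t).1 = e₀.1 + t := fun t => by
    induction t with
    | zero => simp [f]
    | succ t ih => rw [hsucc, hfst₁, ih]; push_cast; ring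
  have hsnd : ∀ (j : ℕ) (hj : j < m + 1) t, (f t).2 ⟨j, hj⟩ = (f (t + j)).2 0 := by
    intro j
    induction j with
    | zero => simp
    | succ j ih =>
      intro hj t
      rw [show t + (j + 1) = t + 1 + j by ring, ← ih (by omega), hsucc]
      exact (hsnd₁ _ ⟨j, by omega⟩).symm
  refine ⟨fun t => (f t).2 0, fun t => by
    simp only [(hf _ _).2 (Nat.add_mod_right t _)], fun s W => ?_⟩
  let word (q : Fin (k ^ (m + 1))) : Fin (m + 1) → Fin k := fun t => (f (s + q * M + t)).2 0
  have hword : ∀ q : Fin (k ^ (m + 1)), f (s + q * M) = (e₀.1 + s, word q) := fun q => by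
    ext1
    · simp [hfst]
    · exact funext fun t => hsnd t t.isLt _
  have hinj : Injective word := fun q q' h => by
    have hmod := Nat.ModEq.add_left_cancel' s ((hf _ _).1 ((hword q).trans (h ▸ hword q').symm))
    rw [mul_comm M] at hmod
    exact Fin.ext ((hmod.mul_right_cancel' (NeZero.ne M)).eq_of_lt_of_lt q.isLt q'.isLt)
  have hbij : Bijective word := (Fintype.bijective_iff_injective_and_card _).2 ⟨hinj, by simp⟩
  exact (existsUnique_congr fun q => funext_iff).1 (hbij.existsUnique W)

end PhasedDeBruijn

theorem exists_phasedDeBruijn (M m k : ℕ) [NeZero k] (hM : 0 < M ∨ m = 0) :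
    ∃ B : ℕ → Fin k, Periodic B (M * k ^ m) ∧
      ∀ (s : ℕ) (W : Fin m → Fin k), ∃! q : Fin (k ^ m), ∀ t : Fin m, B (s + q * M + t) = W t := by
  cases m with
  | zero =>
    exact ⟨fun _ => 0, fun _ => rfl, fun s W =>
      ⟨⟨0, by simp⟩, fun t => t.elim0, fun q _ => Fin.ext (by simpa using q.isLt)⟩⟩
  | succ m =>
    have : NeZero M := ⟨by omega⟩
    obtain ⟨π, hπ, hcyc⟩ :=
      exists_perm_forall_sameCycle (e₀ := ((0 : ZMod M), fun _ => (0 : Fin k)))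
      PhasedDeBruijn.src_rotate fun e => PhasedDeBruijn.reflTransGen _ e
    exact PhasedDeBruijn.exists_of_forall_sameCycle hπ hcyc

namespace Nat

variable {p : ℕ → Prop} [DecidablePred p]

theorem count_add_mul_of_periodic_s8 {L : ℕ} (hp : ∀ j, p (j + L) ↔ p j) (x q : ℕ) :
    count p (x + q * L) = count p x + q * count p L := by
  induction q with
  | zero => simp
  | succ q ih =>
    rw [add_mul, one_mul, ← add_assoc, count_add']
    simp only [hp, ih]
    ring

theorem exists_reindex_by_count {n m : ℕ} (hn : count p n = m) {X : Type*} (v : Fin n → X) :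
    ∃ W : Fin m → X, ∀ f : ℕ → X,
      (∀ t : Fin m, f t = W t) ↔ ∀ j : Fin n, p j → f (count p j) = v j := by
  have hnth : ∀ t : Fin m, nth p t < n ∧ p (nth p t) ∧ count p (nth p t) = t := fun t => by
    have ht : (t : ℕ) < count p n := hn ▸ t.isLt
    have hcard : ∀ hf : (Set.ofPred p).Finite, (t : ℕ) < hf.toFinset.card :=
      fun hf => ht.trans_le (count_le_card hf n)
    exact ⟨nth_lt_of_lt_count ht, nth_mem _ hcard, count_nth hcard⟩
  refine ⟨fun t => v ⟨nth p t, (hnth t).1⟩, fun f => ⟨fun hW j hj => ?_, fun hv t => ?_⟩⟩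
  · have hlt : count p j < m := hn ▸ count_strict_mono hj j.isLt
    rw [hW ⟨_, hlt⟩]
    exact congrArg v (Fin.ext (nth_count hj))
  · obtain ⟨hlt, hpt, hcount⟩ := hnth t
    calc f t = f (count p (nth p t)) := by rw [hcount]
      _ = _ := hv ⟨_, hlt⟩ hpt

end Nat

theorem existsUnique_fin_mul {L T : ℕ} {P A : ℕ → Prop} {Q : ℕ → ℕ → Prop}
    (hP : ∀ r q, r < L → (P (r + q * L) ↔ A r ∧ Q r q)) (hA : ∃! r : Fin L, A r)
    (hQ : ∀ r, A r → ∃! q : Fin T, Q r q) : ∃! i : Fin (L * T), P i := by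
  obtain ⟨r, hr, hr_uniq⟩ := hA
  obtain ⟨q, hq, hq_uniq⟩ := hQ r hr
  have hL : 0 < L := r.pos
  refine ⟨⟨r + q * L, by nlinarith [r.isLt, q.isLt]⟩, (hP r q r.isLt).2 ⟨hr, hq⟩, fun i hi => ?_⟩
  change P i at hi
  rw [← Nat.mod_add_div' i L] at hi
  obtain ⟨hAi, hQi⟩ := (hP _ _ (Nat.mod_lt _ hL)).1 hi
  have hmod : i % L = r := congrArg Fin.val (hr_uniq ⟨_, Nat.mod_lt _ hL⟩ hAi)
  rw [hmod] at hQi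
  have hdiv : i / L = q :=
    congrArg Fin.val (hq_uniq ⟨_, (Nat.div_lt_iff_lt_mul hL).2 (mul_comm L T ▸ i.isLt)⟩ hQi)
  ext
  rw [← Nat.mod_add_div' i L, hmod, hdiv]

def letterCount {α : Type*} (u : ℕ → Option α) (i : ℕ) : ℕ := Nat.count (fun j => (u j).isSome) i

theorem letterCount_add {α : Type*} (u : ℕ → Option α) (x j : ℕ) :
    letterCount u (x + j) = letterCount u x + letterCount (fun j => u (x + j)) j :=
  Nat.count_add _ _ _

theorem letterCount_add_mul {α : Type*} {u : ℕ → Option α} {L : ℕ} (hu : Periodic u L) (x q : ℕ) :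
    letterCount u (x + q * L) = letterCount u x + q * letterCount u L :=
  Nat.count_add_mul_of_periodic_s8 (fun j => by rw [hu j]) x q

theorem letterCount_eq_sub {α : Type*} {u : ℕ → Option α} {n d : ℕ}
    (h : ((Finset.range n).filter fun j => u j = none).card = d) : letterCount u n = n - d := by
  have := Finset.card_filter_add_card_filter_not (s := Finset.range n) (fun j => u j = none)
  simp only [Finset.card_range, ← Option.isSome_iff_ne_none] at this
  rw [letterCount, Nat.count_eq_card_filter_range]
  omega

theorem letterCount_le_mul {α : Type*} {u : ℕ → Option α} {L : ℕ} (hu : Periodic u L) (hL : 0 < L)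
    (n : ℕ) : letterCount u n ≤ n * letterCount u L := by
  calc letterCount u n ≤ letterCount u (0 + n * L) :=
        Nat.count_monotone _ (by simpa using Nat.le_mul_of_pos_right n hL)
    _ = n * letterCount u L := by rw [letterCount_add_mul hu]; simp [letterCount]

section Lift

variable {a k n : ℕ}

def liftWord (u : ℕ → Option (Fin a)) (B : ℕ → Fin k) (i : ℕ) : Option (Fin (a * k)) :=
  (u i).map fun x => finProdFinEquiv (x, B (letterCount u i))

theorem liftWord_eq_none_iff {u : ℕ → Option (Fin a)} {B : ℕ → Fin k} {i : ℕ} :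
    liftWord u B i = none ↔ u i = none :=
  Option.map_eq_none_iff

theorem covers_liftWord_iff (u : ℕ → Option (Fin a)) (B : ℕ → Fin k) (i : ℕ)
    (v : Fin n → Fin (a * k)) :
    Covers (a * k) n (liftWord u B) i v ↔
      Covers a n u i (fun j => (finProdFinEquiv.symm (v j)).1) ∧
        ∀ j : Fin n, (u (i + j)).isSome →
          B (letterCount u (i + j)) = (finProdFinEquiv.symm (v j)).2 := by
  simp only [Covers, liftWord, ← forall_and]
  refine forall_congr' fun j => ?_
  rcases u (i + j) with _ | x <;> simp [← Equiv.eq_symm_apply, Prod.ext_iff]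

theorem isUpcycle_liftWord {L T m : ℕ} {u : ℕ → Option (Fin a)} {B : ℕ → Fin k}
    (hu : IsUpcycle a n L u) (hwin : ∀ i, letterCount (fun j => u (i + j)) n = m)
    (hBper : Periodic B (letterCount u L * T))
    (hB : ∀ (s : ℕ) (W : Fin m → Fin k), ∃! q : Fin T,
      ∀ t : Fin m, B (s + q * letterCount u L + t) = W t) :
    IsUpcycle (a * k) n (L * T) (liftWord u B) := by
  obtain ⟨hper, hcov⟩ := hu
  have hperq : ∀ x q, u (x + q * L) = u x := fun x q => (Periodic.nat_mul hper q) x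
  refine ⟨fun i => ?_, fun v => ?_⟩
  · simp only [liftWord, mul_comm L T, hperq, letterCount_add_mul hper]
    rw [mul_comm T, hBper]
  refine existsUnique_fin_mul (P := fun i => Covers (a * k) n (liftWord u B) i v)
    (A := fun r => Covers a n u r fun j => (finProdFinEquiv.symm (v j)).1)
    (Q := fun r q => ∀ j : Fin n, (u (r + j)).isSome →
      B (letterCount u r + q * letterCount u L + letterCount (fun j => u (r + j)) j) =
        (finProdFinEquiv.symm (v j)).2)
    (fun r q _ => ?_) (hcov fun j => (finProdFinEquiv.symm (v j)).1) (fun r _ => ?_)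
  · have hu' : ∀ j : ℕ, u (r + q * L + j) = u (r + j) := fun j => by
      rw [add_right_comm, hperq]
    have hcount : ∀ j : ℕ, letterCount u (r + q * L + j) =
        letterCount u r + q * letterCount u L + letterCount (fun j => u (r + j)) j := fun j => by
      rw [add_right_comm, letterCount_add_mul hper, letterCount_add]; ring
    rw [covers_liftWord_iff]
    simp only [Covers, hu', hcount]
  · obtain ⟨W, hW⟩ := Nat.exists_reindex_by_count (hwin r) fun j => (finProdFinEquiv.symm (v j)).2
    exact (existsUnique_congr fun q : Fin T =>
      hW fun x => B (letterCount u r + q * letterCount u L + x)).1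
      (hB (letterCount u r) W)

end Lift

theorem upcycle_alphabet_multiple_general (a n d k : ℕ) (ha : 2 ≤ a)
    (hk : 1 ≤ k)
    (u : ℕ → Option (Fin a))
    (hu : IsUpcycle a n (a ^ (n - d)) u)
    (hdiam : ∀ i, ((Finset.range n).filter (fun j => u (i + j) = none)).card = d) :
    ∃ w : ℕ → Option (Fin (a * k)),
      IsUpcycle (a * k) n ((a * k) ^ (n - d)) w ∧
      ∀ i, ((Finset.range n).filter (fun j => w (i + j) = none)).card = d := by
  have hwin : ∀ i, letterCount (fun j => u (i + j)) n = n - d := fun i =>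
    letterCount_eq_sub (hdiam i)
  have hM : 0 < letterCount u (a ^ (n - d)) ∨ n - d = 0 := by
    have hle := letterCount_le_mul hu.1 (pow_pos (by omega) _) n
    rw [show letterCount u n = n - d by simpa using hwin 0] at hle
    rcases Nat.eq_zero_or_pos (letterCount u (a ^ (n - d))) with h | h
    · exact .inr (by simpa [h] using hle)
    · exact .inl h
  have : NeZero k := ⟨by omega⟩
  obtain ⟨B, hBper, hB⟩ := exists_phasedDeBruijn (letterCount u (a ^ (n - d))) (n - d) k hM
  refine ⟨liftWord u B, ?_, fun i => ?_⟩
  · rw [mul_pow]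
    exact isUpcycle_liftWord hu hwin hBper hB
  · simpa only [liftWord_eq_none_iff] using hdiam i

/-- If there exists an upcycle for `{0,…,a-1}^n` with diamondicity `d` (length
`a ^ (n-d)`, exactly `d` diamonds per `n`-window), then for every `k ≥ 1` there exists
an upcycle for `{0,…,ak-1}^n` with diamondicity `d`. -/
theorem upcycle_alphabet_multiple (a n d k : ℕ) (ha : 2 ≤ a) (hn : 0 < n) (hd : d ≤ n)
    (hk : 1 ≤ k)
    (u : ℕ → Option (Fin a))
    (hu : IsUpcycle a n (a ^ (n - d)) u)
    (hdiam : ∀ i, ((Finset.range n).filter (fun j => u (i + j) = none)).card = d) :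
    ∃ w : ℕ → Option (Fin (a * k)),
      IsUpcycle (a * k) n ((a * k) ^ (n - d)) w ∧
      ∀ i, ((Finset.range n).filter (fun j => w (i + j) = none)).card = d :=
  upcycle_alphabet_multiple_general a n d k ha hk u hu hdiam
end
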